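/- arXiv:math/0503012 — 4 statements merged into one kernel-verified Lean document; each statement's English description precedes it below -/
import Mathlib

section
/- Let A be an abelian group, let α, β ∈ A, and let M, N be two (not necessarily distinct) matchings on [2n]. If the statistic s_{α,β} coincides on T(M,l) and T(N,l) for l = 0 and l = 1, then s_{α,β} coincides on T(M,l) and T(N,l) for every l ≥ 0. -/
/-- Number of crossings of a matching given by its set of edges `(a, b)` with `a < b`:
unordered pairs of edges `e, f` with `min e < min f < max e < max f`. -/
def crStat (s : Finset (ℕ × ℕ)) : ℕ :=
  ((s ×ˢ s).filter fun p => p.1.1 < p.2.1 ∧ p.2.1 < p.1.2 ∧ p.1.2 < p.2.2).card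

/-- Number of nestings: unordered pairs of edges `e, f` with `min e < min f < max f < max e`. -/
def neStat (s : Finset (ℕ × ℕ)) : ℕ :=
  ((s ×ˢ s).filter fun p => p.1.1 < p.2.1 ∧ p.2.2 < p.1.2).card

/-- Number of camels (separated pairs): unordered pairs of edges `e, f` with `max e < min f`. -/
def caStat (s : Finset (ℕ × ℕ)) : ℕ :=
  ((s ×ˢ s).filter fun p => p.1.2 < p.2.1).card

/-- `s` is the edge set of a matching on `[2n] = {1, …, 2n}`: `n` edges `(a, b)` with
`a < b`, and every vertex of `[2n]` belongs to exactly one edge. -/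
def IsMatching (n : ℕ) (s : Finset (ℕ × ℕ)) : Prop :=
  s.card = n ∧
  (∀ e ∈ s, e.1 < e.2 ∧ 1 ≤ e.1 ∧ e.2 ≤ 2 * n) ∧
  (∀ v : ℕ, 1 ≤ v → v ≤ 2 * n → ∃! e, e ∈ s ∧ (v = e.1 ∨ v = e.2))

/-- The order isomorphism `[2n] → {2, …, 2n+2} \ {x}`. -/
def shiftV (x v : ℕ) : ℕ := if v + 1 < x then v + 1 else v + 2

/-- The matching on `[2n+2]` obtained from a matching on `[2n]` by relabeling its vertices
order-isomorphically as `{2, …, 2n+2} \ {x}` and adding the new first edge `{1, x}`. -/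
def addFirst (x : ℕ) (s : Finset (ℕ × ℕ)) : Finset (ℕ × ℕ) :=
  insert (1, x) (s.image fun e => (shiftV x e.1, shiftV x e.2))

/-- All matchings obtained from `s` by adding a new first edge in all possible ways. -/
def childrenM (s : Finset (ℕ × ℕ)) : Multiset (Finset (ℕ × ℕ)) :=
  (Finset.Icc 2 (2 * s.card + 2)).val.map fun x => addFirst x s

/-- `levelM s l` is the multiset `T(s, l)` of matchings obtained from `s` by `l` successive
additions of a new first edge in all possible ways. -/
def levelM (s : Finset (ℕ × ℕ)) : ℕ → Multiset (Finset (ℕ × ℕ))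
  | 0 => {s}
  | l + 1 => (levelM s l).bind childrenM

/-!
Encode a multiset of values in `A` by its image in the semiring `ℕ[A]`, where translating all
values by `c` is multiplication by `[c]`. Give the `2n+1` gaps of a matching `K` the weights
`wⱼ = (#arcs open at gap j) • α + (#arcs closed before gap j) • β`. Adding a new first edge whose
closer lands in gap `j` raises `s_{α,β}` by `wⱼ`, and the weight list of the new matching is
obtained from the old one by a rule that only sees the list: gap `j` is doubled, the weights up to
it are translated by `α`, those from it on by `β`, and a gap of weight `0` is prepended. So the
generating function of `T(K, l)` is `[s(K)] · Φₗ(w(K))` for an operator `Φₗ` on lists. In `ℕ[A]`,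
with `a = [α]`, `b = [β]` and `w⁽ʲ⁾` the list `w` with its entry `j` doubled and the entries up to
it (from it on) multiplied by `a` (by `b`), the complete homogeneous symmetric functions satisfy
`∑ⱼ wⱼ hₑ(w⁽ʲ⁾) = (∑_{c ≤ e} aᶜ b^{e-c}) hₑ₊₁(w)`. Hence every `Φₗ` is a combination of the `hₑ`
with coefficients independent of `w`, and so is symmetric in the weights.
Levels `0` and `1` say exactly that `s(M) = s(N)` and that `w(M)` and `w(N)` agree as multisets.
-/

open Finset

lemma sum_range_getD {M : Type*} [AddCommMonoid M] (u : List M) :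
    ∑ j ∈ range u.length, u.getD j 0 = u.sum := by
  induction u with
  | nil => simp
  | cons z t ih =>
    simp only [List.length_cons, sum_range_succ', List.getD_cons_succ, List.getD_cons_zero, ih,
      List.sum_cons, add_comm]

section Symmetric

variable {R : Type*} [CommSemiring R]

-- `hsymm r u` is the complete homogeneous symmetric polynomial of degree `r` at the entries of `u`.
def hsymm : ℕ → List R → R
  | r, [] => if r = 0 then 1 else 0
  | r, z :: t => ∑ k ∈ range (r + 1), z ^ (r - k) * hsymm k t

@[simp] lemma hsymm_nil (r : ℕ) : hsymm r ([] : List R) = if r = 0 then 1 else 0 := rfl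

lemma hsymm_cons (r : ℕ) (z : R) (t : List R) :
    hsymm r (z :: t) = ∑ k ∈ range (r + 1), z ^ (r - k) * hsymm k t := rfl

@[simp] lemma hsymm_zero (u : List R) : hsymm 0 u = 1 := by
  induction u with
  | nil => rfl
  | cons z t ih => simp [hsymm_cons, ih]

lemma hsymm_append (e : ℕ) (x w : List R) :
    hsymm e (x ++ w) = ∑ k ∈ range (e + 1), hsymm (e - k) x * hsymm k w := by
  induction x generalizing e with
  | nil =>
    rw [List.nil_append, sum_eq_single_of_mem e (self_mem_range_succ e)]
    · simp
    · intro k hk hke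
      have : k < e := lt_of_le_of_ne (mem_range_succ_iff.mp hk) hke
      simp [Nat.sub_eq_zero_iff_le, this.not_ge]
  | cons z x ih =>
    let F k i := z ^ (e - k - i) * hsymm i x * hsymm k w
    calc hsymm e (z :: x ++ w)
        = ∑ m ∈ range (e + 1), ∑ k ∈ range (m + 1), F k (m - k) := by
          rw [List.cons_append, hsymm_cons]
          refine sum_congr rfl fun m hm => ?_
          rw [ih, mul_sum]
          refine sum_congr rfl fun k hk => ?_
          have hkm : k ≤ m := mem_range_succ_iff.mp hk
          simp only [F, Nat.sub_sub, Nat.add_sub_cancel' hkm, mul_assoc]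
      _ = ∑ k ∈ range (e + 1), ∑ i ∈ range (e + 1 - k), F k i := sum_range_diag_flip _ F
      _ = _ := by
          refine sum_congr rfl fun k hk => ?_
          rw [hsymm_cons, sum_mul, Nat.sub_add_comm (mem_range_succ_iff.mp hk)]

lemma hsymm_singleton (r : ℕ) (y : R) : hsymm r [y] = y ^ r := by
  simp [hsymm_cons]

lemma hsymm_map_mul (r : ℕ) (c : R) (u : List R) :
    hsymm r (u.map (c * ·)) = c ^ r * hsymm r u := by
  induction u generalizing r with
  | nil => cases r <;> simp
  | cons z t ih =>
    simp only [List.map_cons, hsymm_cons, ih, mul_sum]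
    refine sum_congr rfl fun k hk => ?_
    rw [← pow_sub_mul_pow c (mem_range_succ_iff.mp hk)]
    ring

lemma hsymm_one_cons (r : ℕ) (w : List R) : hsymm r (1 :: w) = ∑ k ∈ range (r + 1), hsymm k w := by
  simp [hsymm_cons]

def geomSum₂ (x y : R) (n : ℕ) : R := ∑ i ∈ range n, x ^ i * y ^ (n - 1 - i)

@[simp] lemma geomSum₂_zero (x y : R) : geomSum₂ x y 0 = 0 := by simp [geomSum₂]

lemma hsymm_pair (r : ℕ) (x y : R) : hsymm r [x, y] = geomSum₂ x y (r + 1) := by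
  rw [geomSum₂, geom_sum₂_comm, hsymm_cons]
  refine sum_congr rfl fun k _ => ?_
  rw [hsymm_singleton, mul_comm, Nat.add_sub_cancel]

lemma hsymm_perm (r : ℕ) {u v : List R} (h : u.Perm v) : hsymm r u = hsymm r v := by
  induction h generalizing r with
  | nil => rfl
  | cons z _ ih => simp only [hsymm_cons, ih]
  | swap x y t =>
    change hsymm r ([y, x] ++ t) = hsymm r ([x, y] ++ t)
    rw [hsymm_append, hsymm_append]
    refine sum_congr rfl fun k _ => ?_
    rw [hsymm_pair, hsymm_pair, geomSum₂, geomSum₂, geom_sum₂_comm]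
  | trans _ _ ih₁ ih₂ => rw [ih₁, ih₂]

lemma geomSum₂_split (x y : R) {k n : ℕ} (hk : k ≤ n) :
    y ^ k * geomSum₂ x y (n - k) + x ^ (n - k) * geomSum₂ x y k = geomSum₂ x y n := by
  obtain ⟨m, rfl⟩ := Nat.exists_eq_add_of_le' hk
  rw [Nat.add_sub_cancel, geomSum₂, geomSum₂, geomSum₂, sum_range_add, mul_sum, mul_sum]
  congr 1 <;> refine sum_congr rfl fun i hi => ?_
  · rw [show m + k - 1 - i = k + (m - 1 - i) by have := mem_range.mp hi; omega, pow_add]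
    ring
  · rw [show m + k - 1 - (m + i) = k - 1 - i by omega, pow_add]
    ring

variable (a b : R)

def doubleGap (u : List R) (j : ℕ) : List R :=
  (u.take (j + 1)).map (a * ·) ++ (u.drop j).map (b * ·)

@[simp] lemma doubleGap_cons_zero (z : R) (t : List R) :
    doubleGap a b (z :: t) 0 = [a * z, b * z] ++ t.map (b * ·) := by
  simp [doubleGap]

@[simp] lemma doubleGap_cons_succ (z : R) (t : List R) (j : ℕ) :
    doubleGap a b (z :: t) (j + 1) = a * z :: doubleGap a b t j := by
  simp [doubleGap]

lemma sum_mul_hsymm_doubleGap (u : List R) (e : ℕ) :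
    ∑ j ∈ range u.length, u.getD j 0 * hsymm e (doubleGap a b u j)
      = geomSum₂ a b (e + 1) * hsymm (e + 1) u := by
  induction u generalizing e with
  | nil => simp
  | cons z t ih =>
    have head_term : z * hsymm e ([a * z, b * z] ++ t.map (b * ·)) = ∑ k ∈ range (e + 2),
        z ^ (e + 1 - k) * (b ^ k * geomSum₂ a b (e + 1 - k)) * hsymm k t := by
      have hpair : ∀ m, hsymm m [a * z, b * z] = z ^ m * geomSum₂ a b (m + 1) := fun m => by
        rw [show [a * z, b * z] = [a, b].map (z * ·) by simp [mul_comm], hsymm_map_mul, hsymm_pair]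
      rw [hsymm_append, mul_sum, sum_range_succ _ (e + 1), Nat.sub_self, geomSum₂_zero]
      simp only [mul_zero, zero_mul, add_zero, hpair, hsymm_map_mul]
      refine sum_congr rfl fun k hk => ?_
      rw [show e + 1 - k = e - k + 1 by have := mem_range.mp hk; omega]
      ring
    have tail_terms : ∑ i ∈ range t.length, t.getD i 0 * hsymm e (a * z :: doubleGap a b t i) =
        ∑ k ∈ range (e + 2), z ^ (e + 1 - k) * (a ^ (e + 1 - k) * geomSum₂ a b k) * hsymm k t := by
      calc _ = ∑ m ∈ range (e + 1), (a * z) ^ (e - m) *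
            ∑ i ∈ range t.length, t.getD i 0 * hsymm m (doubleGap a b t i) := by
            simp only [hsymm_cons, mul_sum]
            rw [sum_comm]
            refine sum_congr rfl fun m _ => sum_congr rfl fun i _ => by ring
        _ = _ := by
            simp only [ih]
            rw [sum_range_succ' _ (e + 1)]
            simp only [geomSum₂_zero, mul_zero, zero_mul, add_zero, Nat.add_sub_add_right]
            refine sum_congr rfl fun m _ => by ring
    simp only [List.length_cons, sum_range_succ', List.getD_cons_succ, List.getD_cons_zero,
      doubleGap_cons_succ, doubleGap_cons_zero]
    rw [tail_terms, head_term, ← sum_add_distrib, hsymm_cons, mul_sum]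
    refine sum_congr rfl fun k hk => ?_
    rw [← geomSum₂_split a b (mem_range_succ_iff.mp hk)]
    ring

/- If `u` lists the gap weights of a matching, `1 :: doubleGap a b u j` lists those of its child
whose new edge closes in gap `j`, and `u.getD j 0` is the factor by which the child's statistic
exceeds its parent's (`map_gapWeights_addFirst`, `sab_addFirst`). -/
def descend : (List R → R) →ₗ[R] (List R → R) where
  toFun F u := ∑ j ∈ range u.length, u.getD j 0 * F (1 :: doubleGap a b u j)
  map_add' F G := by
    funext u
    simp only [Pi.add_apply, mul_add, sum_add_distrib]
  map_smul' c F := by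
    funext u
    simp only [Pi.smul_apply, smul_eq_mul, RingHom.id_apply, mul_sum]
    exact sum_congr rfl fun j _ => by ring

lemma descend_apply (F : List R → R) (u : List R) :
    descend a b F u = ∑ j ∈ range u.length, u.getD j 0 * F (1 :: doubleGap a b u j) := rfl

lemma descend_one_apply (u : List R) : descend a b 1 u = u.sum := by
  simp only [descend_apply, Pi.one_apply, mul_one, sum_range_getD]

lemma descend_hsymm (r : ℕ) :
    descend a b (hsymm r) = ∑ k ∈ range (r + 1), geomSum₂ a b (k + 1) • hsymm (k + 1) := by
  funext u
  simp only [descend_apply, hsymm_one_cons, mul_sum, Finset.sum_apply, Pi.smul_apply, smul_eq_mul]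
  rw [sum_comm]
  exact sum_congr rfl fun k _ => sum_mul_hsymm_doubleGap a b u k

variable (R) in
def hsymmSpan : Submodule R (List R → R) := Submodule.span R (Set.range hsymm)

lemma hsymmSpan_le_comap_descend : hsymmSpan R ≤ (hsymmSpan R).comap (descend a b) := by
  refine Submodule.span_le.mpr ?_
  rintro _ ⟨r, rfl⟩
  rw [SetLike.mem_coe, Submodule.mem_comap, descend_hsymm]
  exact Submodule.sum_mem _ fun k _ => Submodule.smul_mem _ _ (Submodule.subset_span ⟨k + 1, rfl⟩)

lemma descend_pow_one_mem_hsymmSpan (l : ℕ) : (descend a b ^ l) 1 ∈ hsymmSpan R := by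
  induction l with
  | zero =>
    have : (1 : List R → R) = hsymm 0 := funext fun u => (hsymm_zero u).symm
    rw [pow_zero, Module.End.one_apply, this]
    exact Submodule.subset_span ⟨0, rfl⟩
  | succ l ih =>
    rw [pow_succ', Module.End.mul_apply]
    exact hsymmSpan_le_comap_descend a b ih

lemma eq_of_perm_of_mem_hsymmSpan {F : List R → R} (hF : F ∈ hsymmSpan R) {u v : List R}
    (h : u.Perm v) : F u = F v := by
  induction hF using Submodule.span_induction with
  | mem _ hF => obtain ⟨r, rfl⟩ := hF; exact hsymm_perm r h
  | zero => rfl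
  | add _ _ _ _ ih₁ ih₂ => simp only [Pi.add_apply, ih₁, ih₂]
  | smul c _ _ ih => simp only [Pi.smul_apply, ih]

end Symmetric

lemma shiftV_strictMono (x : ℕ) : StrictMono (shiftV x) := by
  intro v w h
  unfold shiftV
  split_ifs <;> omega

lemma one_le_shiftV (x v : ℕ) : 1 ≤ shiftV x v := by
  unfold shiftV; split_ifs <;> omega

lemma shiftV_le_iff_of_lt {x i : ℕ} (hix : i < x) (v : ℕ) : shiftV x v ≤ i ↔ v + 1 ≤ i := by
  unfold shiftV; split_ifs <;> omega

lemma shiftV_le_iff_of_le {x i : ℕ} (hxi : x ≤ i) (v : ℕ) : shiftV x v ≤ i ↔ v + 2 ≤ i := by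
  unfold shiftV; split_ifs <;> omega

lemma shiftV_lt_iff {x : ℕ} (v : ℕ) : shiftV x v < x ↔ v + 2 ≤ x := by
  unfold shiftV; split_ifs <;> omega

lemma lt_shiftV_iff {x : ℕ} (v : ℕ) : x < shiftV x v ↔ x ≤ v + 1 := by
  unfold shiftV; split_ifs <;> omega

lemma one_lt_shiftV_iff {x : ℕ} (hx : 2 ≤ x) (v : ℕ) : 1 < shiftV x v ↔ 1 ≤ v := by
  unfold shiftV; split_ifs <;> omega

lemma prodMap_shiftV_injective (x : ℕ) : Function.Injective (Prod.map (shiftV x) (shiftV x)) :=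
  (shiftV_strictMono x).injective.prodMap (shiftV_strictMono x).injective

lemma addFirst_eq (x : ℕ) (s : Finset (ℕ × ℕ)) :
    addFirst x s = insert (1, x) (s.image (Prod.map (shiftV x) (shiftV x))) := rfl

lemma one_le_of_mem_image_shiftV {x : ℕ} {s : Finset (ℕ × ℕ)} {f : ℕ × ℕ}
    (hf : f ∈ s.image (Prod.map (shiftV x) (shiftV x))) : 1 ≤ f.1 := by
  obtain ⟨e, -, rfl⟩ := mem_image.mp hf
  exact one_le_shiftV x e.1

lemma mk_one_notMem_image_shiftV (x : ℕ) (s : Finset (ℕ × ℕ)) :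
    (1, x) ∉ s.image (Prod.map (shiftV x) (shiftV x)) := by
  simp only [mem_image, Prod.map, Prod.mk.injEq, not_exists, not_and]
  intro e _ _ h
  have := lt_shiftV_iff (x := x) e.2
  have := shiftV_lt_iff (x := x) e.2
  omega

lemma card_addFirst (x : ℕ) (s : Finset (ℕ × ℕ)) : #(addFirst x s) = #s + 1 := by
  rw [addFirst_eq, card_insert_of_notMem (mk_one_notMem_image_shiftV x s),
    card_image_of_injective _ (prodMap_shiftV_injective x)]

def StartsPos (s : Finset (ℕ × ℕ)) : Prop := ∀ e ∈ s, 1 ≤ e.1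

lemma IsMatching.startsPos {n : ℕ} {s : Finset (ℕ × ℕ)} (h : IsMatching n s) : StartsPos s :=
  fun e he => (h.2.1 e he).2.1

lemma startsPos_addFirst (x : ℕ) (s : Finset (ℕ × ℕ)) : StartsPos (addFirst x s) := by
  simp only [StartsPos, addFirst_eq, mem_insert, mem_image, forall_eq_or_imp, le_refl, true_and,
    forall_exists_index, and_imp]
  rintro _ e _ rfl
  exact one_le_shiftV x e.1

lemma card_filter_insert_product {α : Type*} [DecidableEq α] {P : α × α → Prop} [DecidablePred P]
    {a : α} {s : Finset α} (ha : a ∉ s) (haa : ¬P (a, a)) (hsa : ∀ f ∈ s, ¬P (f, a)) :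
    #{p ∈ insert a s ×ˢ insert a s | P p} = #{f ∈ s | P (a, f)} + #{p ∈ s ×ˢ s | P p} := by
  simp only [card_filter, sum_product, sum_insert ha, haa, if_false, zero_add]
  congr 1
  exact sum_congr rfl fun f hf => by simp [hsa f hf]

lemma card_filter_image_product {α β : Type*} [DecidableEq β] {φ : α → β}
    (hφ : Function.Injective φ) (P : β × β → Prop) [DecidablePred P] (s : Finset α) :
    #{p ∈ s.image φ ×ˢ s.image φ | P p} = #{p ∈ s ×ˢ s | P (Prod.map φ φ p)} := by
  rw [← prodMap_image_product, filter_image, card_image_of_injective _ (hφ.prodMap hφ)]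

lemma card_filter_addFirst_product {x : ℕ} {s : Finset (ℕ × ℕ)}
    (P : (ℕ × ℕ) × (ℕ × ℕ) → Prop) [DecidablePred P]
    (hP : ∀ e f, P (Prod.map (shiftV x) (shiftV x) e, Prod.map (shiftV x) (shiftV x) f) ↔ P (e, f))
    (hnew : ∀ f : ℕ × ℕ, 1 ≤ f.1 → ¬P (f, (1, x))) :
    #{p ∈ addFirst x s ×ˢ addFirst x s | P p}
      = #{p ∈ s ×ˢ s | P p} + #{e ∈ s | P ((1, x), Prod.map (shiftV x) (shiftV x) e)} := by
  rw [addFirst_eq, card_filter_insert_product (mk_one_notMem_image_shiftV x s) (hnew _ le_rfl)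
      fun f hf => hnew f (one_le_of_mem_image_shiftV hf),
    card_filter_image_product (prodMap_shiftV_injective x), filter_image,
    card_image_of_injective _ (prodMap_shiftV_injective x), add_comm]
  congr 2
  ext ⟨e, f⟩
  simp only [mem_filter, Prod.map_apply, hP]

def openAt (s : Finset (ℕ × ℕ)) (i : ℕ) : ℕ := #{e ∈ s | e.1 ≤ i ∧ i < e.2}

def closedBy (s : Finset (ℕ × ℕ)) (i : ℕ) : ℕ := #{e ∈ s | e.2 ≤ i}

-- The new edge `{1, j + 2}` closes in gap `j` of `s`.
lemma crStat_addFirst {s : Finset (ℕ × ℕ)} (hs : StartsPos s) (j : ℕ) :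
    crStat (addFirst (j + 2) s) = crStat s + openAt s j := by
  have hmono := shiftV_strictMono (j + 2)
  rw [crStat, card_filter_addFirst_product _ (fun e f => by simp [hmono.lt_iff_lt])
    fun f hf => by dsimp only; omega, crStat, openAt]
  congr 2
  ext e
  simp only [mem_filter, Prod.map_fst, Prod.map_snd, one_lt_shiftV_iff (le_add_self : 2 ≤ j + 2),
    shiftV_lt_iff, lt_shiftV_iff, and_congr_right_iff]
  intro he
  have := hs e he
  omega

lemma neStat_addFirst {s : Finset (ℕ × ℕ)} (hs : StartsPos s) (j : ℕ) :
    neStat (addFirst (j + 2) s) = neStat s + closedBy s j := by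
  have hmono := shiftV_strictMono (j + 2)
  rw [neStat, card_filter_addFirst_product _ (fun e f => by simp [hmono.lt_iff_lt])
    fun f hf => by dsimp only; omega, neStat, closedBy]
  congr 2
  ext e
  simp only [mem_filter, Prod.map_fst, Prod.map_snd, one_lt_shiftV_iff (le_add_self : 2 ≤ j + 2),
    shiftV_lt_iff, and_congr_right_iff]
  intro he
  have := hs e he
  omega

lemma openAt_insert {e : ℕ × ℕ} {s : Finset (ℕ × ℕ)} (he : e ∉ s) (i : ℕ) :
    openAt (insert e s) i = openAt s i + if e.1 ≤ i ∧ i < e.2 then 1 else 0 := by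
  rw [openAt, filter_insert]
  split_ifs <;> simp [card_insert_of_notMem fun h => he (mem_of_mem_filter _ h), openAt]

lemma closedBy_insert {e : ℕ × ℕ} {s : Finset (ℕ × ℕ)} (he : e ∉ s) (i : ℕ) :
    closedBy (insert e s) i = closedBy s i + if e.2 ≤ i then 1 else 0 := by
  rw [closedBy, filter_insert]
  split_ifs <;> simp [card_insert_of_notMem fun h => he (mem_of_mem_filter _ h), closedBy]

lemma openAt_image {φ : ℕ → ℕ} (hφ : Function.Injective φ) {i i' : ℕ}
    (hle : ∀ v, φ v ≤ i ↔ v ≤ i') (s : Finset (ℕ × ℕ)) :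
    openAt (s.image (Prod.map φ φ)) i = openAt s i' := by
  rw [openAt, filter_image, card_image_of_injective _ (hφ.prodMap hφ), openAt]
  simp only [Prod.map_fst, Prod.map_snd, hle, ← not_le]

lemma closedBy_image {φ : ℕ → ℕ} (hφ : Function.Injective φ) {i i' : ℕ}
    (hle : ∀ v, φ v ≤ i ↔ v ≤ i') (s : Finset (ℕ × ℕ)) :
    closedBy (s.image (Prod.map φ φ)) i = closedBy s i' := by
  rw [closedBy, filter_image, card_image_of_injective _ (hφ.prodMap hφ), closedBy]
  simp only [Prod.map_snd, hle]

lemma openAt_addFirst {x i i' : ℕ} (hle : ∀ v, shiftV x v ≤ i ↔ v ≤ i') (s : Finset (ℕ × ℕ)) :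
    openAt (addFirst x s) i = openAt s i' + if 1 ≤ i ∧ i < x then 1 else 0 := by
  rw [addFirst_eq, openAt_insert (mk_one_notMem_image_shiftV x s),
    openAt_image (shiftV_strictMono x).injective hle]

lemma closedBy_addFirst {x i i' : ℕ} (hle : ∀ v, shiftV x v ≤ i ↔ v ≤ i') (s : Finset (ℕ × ℕ)) :
    closedBy (addFirst x s) i = closedBy s i' + if x ≤ i then 1 else 0 := by
  rw [addFirst_eq, closedBy_insert (mk_one_notMem_image_shiftV x s),
    closedBy_image (shiftV_strictMono x).injective hle]

lemma List.drop_range_eq_map {j n : ℕ} (h : j ≤ n) :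
    (List.range n).drop j = (List.range (n - j)).map (j + ·) := by
  conv_lhs => rw [← Nat.add_sub_cancel' h, List.range_add]
  exact List.drop_left' List.length_range

section Weights

variable {A : Type*} [AddCommMonoid A] (α β : A)

-- Gap `i` lies between the vertices `i` and `i + 1`; gap `0` precedes vertex `1`.
def gapWeight (s : Finset (ℕ × ℕ)) (i : ℕ) : A := openAt s i • α + closedBy s i • β

def gapWeights (s : Finset (ℕ × ℕ)) : List A := (List.range (2 * #s + 1)).map (gapWeight α β s)

lemma gapWeight_addFirst_zero (x : ℕ) (s : Finset (ℕ × ℕ)) :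
    gapWeight α β (addFirst (x + 1) s) 0 = 0 := by
  have hv : ∀ e ∈ addFirst (x + 1) s, 1 ≤ e.1 ∧ 1 ≤ e.2 := by
    simp only [addFirst_eq, mem_insert, mem_image, forall_eq_or_imp, forall_exists_index, and_imp]
    refine ⟨by simp, ?_⟩
    rintro _ e _ rfl
    exact ⟨one_le_shiftV _ _, one_le_shiftV _ _⟩
  have hopen : openAt (addFirst (x + 1) s) 0 = 0 :=
    card_eq_zero.mpr (filter_eq_empty_iff.mpr fun e he => by have := hv e he; omega)
  have hclosed : closedBy (addFirst (x + 1) s) 0 = 0 :=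
    card_eq_zero.mpr (filter_eq_empty_iff.mpr fun e he => by have := hv e he; omega)
  simp [gapWeight, hopen, hclosed]

lemma gapWeight_addFirst_of_lt {x i : ℕ} (s : Finset (ℕ × ℕ)) (hix : i + 1 < x) :
    gapWeight α β (addFirst x s) (i + 1) = α + gapWeight α β s i := by
  have hle : ∀ v, shiftV x v ≤ i + 1 ↔ v ≤ i := fun v => by
    rw [shiftV_le_iff_of_lt hix]; omega
  rw [gapWeight, gapWeight, openAt_addFirst hle, closedBy_addFirst hle, if_pos (by omega),
    if_neg (by omega), add_zero, succ_nsmul]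
  abel

lemma gapWeight_addFirst_of_le {x i : ℕ} (s : Finset (ℕ × ℕ)) (hxi : x ≤ i + 2) :
    gapWeight α β (addFirst x s) (i + 2) = β + gapWeight α β s i := by
  have hle : ∀ v, shiftV x v ≤ i + 2 ↔ v ≤ i := fun v => by
    rw [shiftV_le_iff_of_le hxi]; omega
  rw [gapWeight, gapWeight, openAt_addFirst hle, closedBy_addFirst hle, if_neg (by omega),
    if_pos hxi, add_zero, succ_nsmul]
  abel

lemma gapWeights_addFirst {j : ℕ} (s : Finset (ℕ × ℕ)) (hj : j ≤ 2 * #s) :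
    gapWeights α β (addFirst (j + 2) s)
      = 0 :: (((gapWeights α β s).take (j + 1)).map (α + ·)
          ++ ((gapWeights α β s).drop j).map (β + ·)) := by
  have hsplit : 2 * #s + 2 = (j + 1) + (2 * #s + 1 - j) := by omega
  rw [gapWeights, card_addFirst, show 2 * (#s + 1) + 1 = 2 * #s + 2 + 1 by ring,
    List.range_succ_eq_map, List.map_cons, gapWeight_addFirst_zero, hsplit, List.range_add,
    gapWeights, ← List.map_take, List.take_range, min_eq_left (by omega), ← List.map_drop,
    List.drop_range_eq_map (by omega : j ≤ 2 * #s + 1)]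
  simp only [List.map_append, List.map_map]
  congr 2
  · refine List.map_inj_left.mpr fun i hi => ?_
    exact gapWeight_addFirst_of_lt α β s (by simp at hi; omega)
  · refine List.map_inj_left.mpr fun i _ => ?_
    simpa [Function.comp, show j + 1 + i + 1 = j + i + 2 by ring] using
      gapWeight_addFirst_of_le α β s (x := j + 2) (i := j + i) (by omega)

end Weights

lemma levelM_succ_eq_bind_childrenM (s : Finset (ℕ × ℕ)) (l : ℕ) :
    levelM s (l + 1) = (childrenM s).bind (levelM · l) := by
  induction l with
  | zero =>
    simp only [levelM, Multiset.singleton_bind]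
    exact ((Multiset.bind_singleton _ id).trans (Multiset.map_id _)).symm
  | succ l ih => rw [levelM, ih, Multiset.bind_assoc]; rfl

section GroupRing

variable {A : Type*} [AddCommMonoid A]

local notation "ε" => AddMonoidAlgebra.of' ℕ A

lemma AddMonoidAlgebra.of'_add (a b : A) : ε (a + b) = ε a * ε b := by
  simp [AddMonoidAlgebra.of'_apply, AddMonoidAlgebra.single_mul_single]

lemma AddMonoidAlgebra.of'_zero : ε 0 = 1 := rfl

variable (A) in
open Classical in
noncomputable def toGroupRing : Multiset A ≃+ AddMonoidAlgebra ℕ A :=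
  Multiset.toFinsupp.trans AddMonoidAlgebra.coeffAddEquiv.symm

lemma toGroupRing_singleton (a : A) : toGroupRing A {a} = ε a := by
  classical
  simp [toGroupRing, Multiset.toFinsupp_singleton]

lemma toGroupRing_cons (a : A) (m : Multiset A) :
    toGroupRing A (a ::ₘ m) = ε a + toGroupRing A m := by
  rw [← Multiset.singleton_add, map_add, toGroupRing_singleton]

lemma toGroupRing_coe (u : List A) : toGroupRing A u = (u.map ε).sum := by
  induction u with
  | nil => simp
  | cons a u ih => rw [← Multiset.cons_coe, toGroupRing_cons, ih, List.map_cons, List.sum_cons]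

lemma toGroupRing_map_add (c : A) (m : Multiset A) :
    toGroupRing A (m.map (c + ·)) = ε c * toGroupRing A m := by
  induction m using Multiset.induction with
  | empty => simp
  | cons a m ih =>
    rw [Multiset.map_cons, toGroupRing_cons, toGroupRing_cons, ih, mul_add,
      AddMonoidAlgebra.of'_add]

lemma toGroupRing_bind {ι : Type*} (m : Multiset ι) (f : ι → Multiset A) :
    toGroupRing A (m.bind f) = (m.map (toGroupRing A ∘ f)).sum := by
  rw [Multiset.bind, Multiset.join, map_multiset_sum, Multiset.map_map]

end GroupRing

section Levels

variable {A : Type*} [AddCommMonoid A] (α β : A)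

local notation "ε" => AddMonoidAlgebra.of' ℕ A

def sab (K : Finset (ℕ × ℕ)) : A := crStat K • α + neStat K • β

lemma sab_addFirst {s : Finset (ℕ × ℕ)} (hs : StartsPos s) (j : ℕ) :
    sab α β (addFirst (j + 2) s) = sab α β s + gapWeight α β s j := by
  rw [sab, sab, gapWeight, crStat_addFirst hs, neStat_addFirst hs, add_nsmul, add_nsmul]
  abel

lemma map_gapWeights_addFirst {j : ℕ} (s : Finset (ℕ × ℕ)) (hj : j ≤ 2 * s.card) :
    (gapWeights α β (addFirst (j + 2) s)).map ε
      = 1 :: doubleGap (ε α) (ε β) ((gapWeights α β s).map ε) j := by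
  simp only [gapWeights_addFirst α β s hj, doubleGap, List.map_cons, List.map_append,
    List.map_take, List.map_drop, List.map_map, Function.comp_def, AddMonoidAlgebra.of'_add,
    AddMonoidAlgebra.of'_zero]

lemma sum_childrenM {M : Type*} [AddCommMonoid M] (s : Finset (ℕ × ℕ)) (f : Finset (ℕ × ℕ) → M) :
    ((childrenM s).map f).sum = ∑ j ∈ range (2 * s.card + 1), f (addFirst (j + 2) s) := by
  rw [childrenM, Multiset.map_map, ← Finset.sum_eq_multiset_sum, ← Finset.Ico_add_one_right_eq_Icc,
    sum_Ico_eq_sum_range]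
  simp only [Function.comp, show 2 * s.card + 2 + 1 - 2 = 2 * s.card + 1 by omega, add_comm 2]

lemma toGroupRing_levelM {s : Finset (ℕ × ℕ)} (hs : StartsPos s) (l : ℕ) :
    toGroupRing A ((levelM s l).map (sab α β))
      = ε (sab α β s) * (descend (ε α) (ε β) ^ l) 1 ((gapWeights α β s).map ε) := by
  induction l generalizing s with
  | zero => simp [levelM, toGroupRing_singleton]
  | succ l ih =>
    rw [levelM_succ_eq_bind_childrenM, Multiset.map_bind, toGroupRing_bind, sum_childrenM,
      pow_succ', Module.End.mul_apply, descend_apply, mul_sum]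
    simp only [List.length_map, gapWeights, List.length_range]
    refine sum_congr rfl fun j hj => ?_
    have hj : j ≤ 2 * s.card := Nat.lt_succ_iff.mp (mem_range.mp hj)
    rw [Function.comp_apply, ih (startsPos_addFirst _ s), sab_addFirst α β hs,
      AddMonoidAlgebra.of'_add, ← gapWeights, map_gapWeights_addFirst α β s hj]
    have hget : ((gapWeights α β s).map ε).getD j 0 = ε (gapWeight α β s j) := by
      rw [List.getD_eq_getElem _ _ (by simp [gapWeights]; omega)]
      simp [gapWeights]
    rw [hget, mul_assoc]

lemma levelM_one_map_sab {s : Finset (ℕ × ℕ)} (hs : StartsPos s) :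
    (levelM s 1).map (sab α β) = (gapWeights α β s : Multiset A).map (sab α β s + ·) := by
  apply (toGroupRing A).injective
  rw [toGroupRing_levelM α β hs 1, toGroupRing_map_add, toGroupRing_coe, pow_one,
    descend_one_apply]

end Levels

/-- if the statistic `s_{α,β}(K) = cr(K)·α + ne(K)·β` coincides (as a multiset of
values) on `T(M,l)` and `T(N,l)` for `l = 0, 1`, then it coincides for every `l ≥ 0`. -/
theorem sab_coincide_of_first_two_levels
    {A : Type*} [AddCommGroup A] (α β : A) (n : ℕ)
    (M N : Finset (ℕ × ℕ)) (hM : IsMatching n M) (hN : IsMatching n N)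
    (h0 : (levelM M 0).map (fun K => crStat K • α + neStat K • β)
        = (levelM N 0).map (fun K => crStat K • α + neStat K • β))
    (h1 : (levelM M 1).map (fun K => crStat K • α + neStat K • β)
        = (levelM N 1).map (fun K => crStat K • α + neStat K • β)) :
    ∀ l : ℕ, (levelM M l).map (fun K => crStat K • α + neStat K • β)
        = (levelM N l).map (fun K => crStat K • α + neStat K • β) := by
  have hsM := hM.startsPos
  have hsN := hN.startsPos
  have hsab : sab α β M = sab α β N := Multiset.singleton_inj.mp h0
  have hperm : (gapWeights α β M).Perm (gapWeights α β N) := by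
    change (levelM M 1).map (sab α β) = (levelM N 1).map (sab α β) at h1
    rw [levelM_one_map_sab α β hsM, levelM_one_map_sab α β hsN, hsab] at h1
    exact Multiset.coe_eq_coe.mp (Multiset.map_injective (add_right_injective _) h1)
  intro l
  apply (toGroupRing A).injective
  change toGroupRing A ((levelM M l).map (sab α β)) = toGroupRing A ((levelM N l).map (sab α β))
  rw [toGroupRing_levelM α β hsM, toGroupRing_levelM α β hsN, hsab,
    eq_of_perm_of_mem_hsymmSpan (descend_pow_one_mem_hsymmSpan _ _ l) (hperm.map _)]
end

section
/- For every k ∈ ℕ₀ and n ∈ ℕ, the number of matchings on [2n] with exactly k crossings equals the number of matchings on [2n] with exactly k nestings. -/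
/-!
Remove the edge `(o, d)` of a matching of `{1, …, m}` whose opener `o` is largest. Every vertex
right of `o` is a closer of an edge opened before `o`, so `(o, d)` crosses exactly the `d - o - 1`
edges closing between `o` and `d` and is nested in exactly the `m - d` edges closing after `d`.
Conversely, `d > o` is arbitrary and the rest is any matching of the other `m - 2` vertices with
all openers left of `o`. Hence the distributions of `cr` and `ne` over matchings with openers below
a bound obey the same recursion up to the reflection `d - o - 1 ↔ m - d`, and agree by induction.
-/

open Finset

def IsMatchingOn (V : Finset ℕ) (s : Finset (ℕ × ℕ)) : Prop :=
  (∀ e ∈ s, e.1 ∈ V ∧ e.2 ∈ V ∧ e.1 < e.2) ∧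
    ∀ v ∈ V, ∃! e, e ∈ s ∧ (v = e.1 ∨ v = e.2)

namespace IsMatchingOn

variable {V : Finset ℕ} {s : Finset (ℕ × ℕ)}

theorem eq_of_mem_of_mem (hs : IsMatchingOn V s) {e f : ℕ × ℕ} (he : e ∈ s) (hf : f ∈ s)
    {v : ℕ} (hve : v = e.1 ∨ v = e.2) (hvf : v = f.1 ∨ v = f.2) : e = f := by
  have hv : v ∈ V := by rcases hve with rfl | rfl <;> simp [hs.1 e he]
  exact (hs.2 v hv).unique ⟨he, hve⟩ ⟨hf, hvf⟩

theorem two_mul_card (hs : IsMatchingOn V s) : 2 * #s = #V := by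
  have hV : V = s.biUnion fun e => {e.1, e.2} := by
    ext v
    simp only [mem_biUnion, mem_insert, mem_singleton]
    refine ⟨fun hv => (hs.2 v hv).exists, ?_⟩
    rintro ⟨e, he, rfl | rfl⟩ <;> simp [hs.1 e he]
  rw [hV, card_biUnion, sum_congr rfl fun e he => card_pair (hs.1 e he).2.2.ne, sum_const,
    smul_eq_mul, mul_comm]
  intro e he f hf hef
  simp only [Function.onFun, disjoint_left, mem_insert, mem_singleton]
  exact fun v hve hvf => hef (hs.eq_of_mem_of_mem he hf hve hvf)

theorem insert_edge {o d : ℕ} (hs : IsMatchingOn (V \ {o, d}) s) (ho : o ∈ V) (hd : d ∈ V)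
    (hod : o < d) : IsMatchingOn V (insert (o, d) s) := by
  have hvert : ∀ e ∈ s, ∀ v, (v = e.1 ∨ v = e.2) → v ∈ V ∧ v ≠ o ∧ v ≠ d := by
    intro e he v hv
    have := hs.1 e he
    simp only [mem_sdiff, mem_insert, mem_singleton, not_or] at this
    rcases hv with rfl | rfl
    · exact this.1
    · exact this.2.1
  refine ⟨?_, fun v hv => ?_⟩
  · intro e he
    rcases mem_insert.1 he with rfl | he
    · exact ⟨ho, hd, hod⟩
    · exact ⟨(hvert e he _ (.inl rfl)).1, (hvert e he _ (.inr rfl)).1, (hs.1 e he).2.2⟩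
  by_cases hvod : v = o ∨ v = d
  · refine ⟨(o, d), ⟨mem_insert_self _ _, hvod⟩, fun e ⟨he, hve⟩ => ?_⟩
    rcases mem_insert.1 he with rfl | he
    · rfl
    · have := hvert e he v hve
      omega
  · obtain ⟨e, ⟨he, hve⟩, huniq⟩ := hs.2 v (by simpa [hv] using hvod)
    refine ⟨e, ⟨mem_insert_of_mem he, hve⟩, fun f ⟨hf, hvf⟩ => ?_⟩
    rcases mem_insert.1 hf with rfl | hf
    · exact absurd hvf hvod
    · exact huniq f ⟨hf, hvf⟩

theorem erase_edge {o d : ℕ} (hs : IsMatchingOn V s) (hod : (o, d) ∈ s) :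
    IsMatchingOn (V \ {o, d}) (s.erase (o, d)) := by
  refine ⟨fun e he => ?_, fun v hv => ?_⟩
  · obtain ⟨hne, he⟩ := mem_erase.1 he
    have h := hs.1 e he
    have hfresh : ∀ v, (v = e.1 ∨ v = e.2) → v ≠ o ∧ v ≠ d := fun v hv =>
      ⟨fun hvo => hne (hs.eq_of_mem_of_mem he hod hv (.inl hvo)),
        fun hvd => hne (hs.eq_of_mem_of_mem he hod hv (.inr hvd))⟩
    simp only [mem_sdiff, mem_insert, mem_singleton, not_or]
    exact ⟨⟨h.1, hfresh _ (.inl rfl)⟩, ⟨h.2.1, hfresh _ (.inr rfl)⟩, h.2.2⟩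
  · simp only [mem_sdiff, mem_insert, mem_singleton, not_or] at hv
    obtain ⟨e, ⟨he, hve⟩, huniq⟩ := hs.2 v hv.1
    have hne : e ≠ (o, d) := by rintro rfl; omega
    refine ⟨e, ⟨mem_erase.2 ⟨hne, he⟩, hve⟩, fun f ⟨hf, hvf⟩ => ?_⟩
    exact huniq f ⟨mem_of_mem_erase hf, hvf⟩

theorem card_filter_snd {P : ℕ → Prop} [DecidablePred P] (hs : IsMatchingOn V s)
    (hP : ∀ e ∈ s, ¬ P e.1) : #(s.filter fun e => P e.2) = #(V.filter P) := by
  refine card_bij (fun e _ => e.2) (fun e he => ?_) (fun e he f hf hef => ?_)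
    fun v hv => ?_
  · obtain ⟨he, hPe⟩ := mem_filter.1 he
    exact mem_filter.2 ⟨(hs.1 e he).2.1, hPe⟩
  · exact hs.eq_of_mem_of_mem (mem_filter.1 he).1 (mem_filter.1 hf).1 (.inr rfl) (.inr hef)
  · obtain ⟨hv, hPv⟩ := mem_filter.1 hv
    obtain ⟨e, ⟨he, hve⟩, -⟩ := hs.2 v hv
    rcases hve with rfl | rfl
    · exact absurd hPv (hP e he)
    · exact ⟨e, mem_filter.2 ⟨he, hPv⟩, rfl⟩

end IsMatchingOn

theorem isMatchingOn_image_iff {V : Finset ℕ} {s : Finset (ℕ × ℕ)} {φ : ℕ → ℕ}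
    (hφ : StrictMono φ) :
    IsMatchingOn (V.image φ) (s.image (Prod.map φ φ)) ↔ IsMatchingOn V s := by
  have hmem : ∀ v, φ v ∈ V.image φ ↔ v ∈ V := fun v => hφ.injective.mem_finset_image
  have hinc : ∀ v (e : ℕ × ℕ),
      (φ v = φ e.1 ∨ φ v = φ e.2) ↔ (v = e.1 ∨ v = e.2) := by
    simp [hφ.injective.eq_iff]
  have hinj : Function.Injective (Prod.map φ φ) := hφ.injective.prodMap hφ.injective
  constructor
  · rintro ⟨hedge, hcover⟩
    refine ⟨fun e he => ?_, fun v hv => ?_⟩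
    · obtain ⟨h1, h2, h3⟩ := hedge _ (mem_image_of_mem _ he)
      exact ⟨(hmem _).1 h1, (hmem _).1 h2, hφ.lt_iff_lt.1 h3⟩
    · obtain ⟨_, ⟨he', hve'⟩, huniq⟩ := hcover (φ v) ((hmem v).2 hv)
      obtain ⟨e, he, rfl⟩ := mem_image.1 he'
      refine ⟨e, ⟨he, (hinc v e).1 hve'⟩, fun f ⟨hf, hvf⟩ => hinj ?_⟩
      exact huniq _ ⟨mem_image_of_mem _ hf, (hinc v f).2 hvf⟩
  · rintro ⟨hedge, hcover⟩
    refine ⟨fun e he => ?_, fun w hw => ?_⟩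
    · obtain ⟨e, he', rfl⟩ := mem_image.1 he
      obtain ⟨h1, h2, h3⟩ := hedge e he'
      exact ⟨(hmem _).2 h1, (hmem _).2 h2, hφ h3⟩
    · obtain ⟨v, hv, rfl⟩ := mem_image.1 hw
      obtain ⟨e, ⟨he, hve⟩, huniq⟩ := hcover v hv
      refine ⟨Prod.map φ φ e, ⟨mem_image_of_mem _ he, (hinc v e).2 hve⟩, ?_⟩
      rintro _ ⟨hf', hvf⟩
      obtain ⟨f, hf, rfl⟩ := mem_image.1 hf'
      rw [huniq f ⟨hf, (hinc v f).1 hvf⟩]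

section PairStatistics

variable {α β : Type*} [DecidableEq β] (R : β × β → Prop) [DecidablePred R]

theorem card_filter_product_image [DecidableEq α] {f : α → β} (hf : Function.Injective f)
    (s : Finset α) :
    #((s.image f ×ˢ s.image f).filter R) = #((s ×ˢ s).filter fun p => R (Prod.map f f p)) := by
  rw [← prodMap_image_product, filter_image, card_image_of_injective _ (hf.prodMap hf)]

theorem card_filter_product_insert {x : β} {X : Finset β} (hx : x ∉ X)
    (hxX : ∀ b ∈ insert x X, ¬ R (x, b)) :
    #((insert x X ×ˢ insert x X).filter R) =
      #((X ×ˢ X).filter R) + #(X.filter fun a => R (a, x)) := by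
  simp only [card_filter, sum_product, sum_insert hx, if_neg (hxX _ (mem_insert_self x X)),
    sum_add_distrib]
  rw [sum_eq_zero fun b hb => if_neg (hxX b (mem_insert_of_mem hb))]
  ring

end PairStatistics

theorem crStat_image {φ : ℕ → ℕ} (hφ : StrictMono φ) (s : Finset (ℕ × ℕ)) :
    crStat (s.image (Prod.map φ φ)) = crStat s := by
  simp only [crStat, card_filter_product_image _ (hφ.injective.prodMap hφ.injective), Prod.map,
    hφ.lt_iff_lt]

theorem neStat_image {φ : ℕ → ℕ} (hφ : StrictMono φ) (s : Finset (ℕ × ℕ)) :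
    neStat (s.image (Prod.map φ φ)) = neStat s := by
  simp only [neStat, card_filter_product_image _ (hφ.injective.prodMap hφ.injective), Prod.map,
    hφ.lt_iff_lt]

theorem crStat_insert {o d : ℕ} {X : Finset (ℕ × ℕ)} (hX : ∀ e ∈ X, e.1 < o) :
    crStat (insert (o, d) X) = crStat X + #(X.filter fun e => o < e.2 ∧ e.2 < d) := by
  have hx : (o, d) ∉ X := fun h => (hX _ h).false
  rw [crStat, card_filter_product_insert _ hx, crStat]
  · congr 2
    exact filter_congr fun e he => by simp [hX e he]
  · intro e he
    have : e.1 ≤ o := by rcases mem_insert.1 he with rfl | he; exacts [le_rfl, (hX e he).le]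
    simp only [not_and, not_lt]
    omega

theorem neStat_insert {o d : ℕ} {X : Finset (ℕ × ℕ)} (hX : ∀ e ∈ X, e.1 < o) :
    neStat (insert (o, d) X) = neStat X + #(X.filter fun e => d < e.2) := by
  have hx : (o, d) ∉ X := fun h => (hX _ h).false
  rw [neStat, card_filter_product_insert _ hx, neStat]
  · congr 2
    exact filter_congr fun e he => by simp [hX e he]
  · intro e he
    have : e.1 ≤ o := by rcases mem_insert.1 he with rfl | he; exacts [le_rfl, (hX e he).le]
    simp only [not_and, not_lt]
    omega

open Classical in
noncomputable def matchingsOpenBelow (m b : ℕ) : Finset (Finset (ℕ × ℕ)) :=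
  (Icc 1 m ×ˢ Icc 1 m).powerset.filter fun s => IsMatchingOn (Icc 1 m) s ∧ ∀ e ∈ s, e.1 < b

theorem mem_matchingsOpenBelow {m b : ℕ} {s : Finset (ℕ × ℕ)} :
    s ∈ matchingsOpenBelow m b ↔ IsMatchingOn (Icc 1 m) s ∧ ∀ e ∈ s, e.1 < b := by
  simp only [matchingsOpenBelow, mem_filter, mem_powerset, and_iff_right_iff_imp]
  exact fun hs e he => mem_product.2 ⟨(hs.1.1 e he).1, (hs.1.1 e he).2.1⟩

def skipTwo (o d v : ℕ) : ℕ := if v < o then v else if v + 1 < d then v + 1 else v + 2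

theorem strictMono_skipTwo (o d : ℕ) : StrictMono (skipTwo o d) := by
  intro v w hvw
  simp only [skipTwo]
  split_ifs <;> omega

theorem le_skipTwo (o d v : ℕ) : v ≤ skipTwo o d v := by
  simp only [skipTwo]
  split_ifs <;> omega

theorem skipTwo_of_lt {o d v : ℕ} (hv : v < o) : skipTwo o d v = v := if_pos hv

theorem image_skipTwo_Icc {m o d : ℕ} (ho : 1 ≤ o) (hod : o < d) (hd : d ≤ m + 2) :
    (Icc 1 m).image (skipTwo o d) = Icc 1 (m + 2) \ {o, d} := by
  ext w
  simp only [mem_image, mem_Icc, mem_sdiff, mem_insert, mem_singleton, skipTwo]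
  constructor
  · rintro ⟨v, hv, rfl⟩
    split_ifs <;> omega
  · intro hw
    refine ⟨if w < o then w else if w < d then w - 1 else w - 2, ?_, ?_⟩ <;> split_ifs <;> omega

def insertEdge (o d : ℕ) (s : Finset (ℕ × ℕ)) : Finset (ℕ × ℕ) :=
  insert (o, d) (s.image (Prod.map (skipTwo o d) (skipTwo o d)))

section InsertEdge

variable {m b o d : ℕ} {s : Finset (ℕ × ℕ)}

theorem isMatchingOn_image_skipTwo (hs : IsMatchingOn (Icc 1 m) s) (ho : 1 ≤ o)
    (hd : d ∈ Ioc o (m + 2)) :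
    IsMatchingOn (Icc 1 (m + 2) \ {o, d}) (s.image (Prod.map (skipTwo o d) (skipTwo o d))) := by
  rw [mem_Ioc] at hd
  rwa [← image_skipTwo_Icc ho hd.1 hd.2, isMatchingOn_image_iff (strictMono_skipTwo o d)]

theorem fst_lt_of_mem_image_skipTwo (hs : ∀ e ∈ s, e.1 < o) :
    ∀ e ∈ s.image (Prod.map (skipTwo o d) (skipTwo o d)), e.1 < o := by
  simp only [mem_image]
  rintro _ ⟨e, he, rfl⟩
  simpa [skipTwo_of_lt (hs e he)] using hs e he

theorem eq_or_fst_lt_of_mem_insertEdge (hs : ∀ e ∈ s, e.1 < o) {e : ℕ × ℕ}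
    (he : e ∈ insertEdge o d s) : e = (o, d) ∨ e.1 < o :=
  (mem_insert.1 he).imp_right (fst_lt_of_mem_image_skipTwo hs e)

theorem insertEdge_mem_matchingsOpenBelow (hs : s ∈ matchingsOpenBelow m o) (ho : o ∈ Ico 1 b)
    (hd : d ∈ Ioc o (m + 2)) : insertEdge o d s ∈ matchingsOpenBelow (m + 2) b := by
  rw [mem_matchingsOpenBelow] at hs ⊢
  rw [mem_Ico] at ho
  refine ⟨(isMatchingOn_image_skipTwo hs.1 ho.1 hd).insert_edge ?_ ?_ (mem_Ioc.1 hd).1,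
    fun e he => ?_⟩
  · exact mem_Icc.2 ⟨ho.1, by have := mem_Ioc.1 hd; omega⟩
  · exact mem_Icc.2 ⟨by have := mem_Ioc.1 hd; omega, (mem_Ioc.1 hd).2⟩
  · rcases eq_or_fst_lt_of_mem_insertEdge hs.2 he with rfl | h <;> omega

theorem crStat_insertEdge (hs : s ∈ matchingsOpenBelow m o) (ho : 1 ≤ o)
    (hd : d ∈ Ioc o (m + 2)) : crStat (insertEdge o d s) = crStat s + (d - o - 1) := by
  rw [mem_matchingsOpenBelow] at hs
  have hopen := fst_lt_of_mem_image_skipTwo (d := d) hs.2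
  rw [insertEdge, crStat_insert hopen, crStat_image (strictMono_skipTwo o d),
    (isMatchingOn_image_skipTwo hs.1 ho hd).card_filter_snd (P := fun v => o < v ∧ v < d)
      fun e he => by have := hopen e he; omega]
  have : (Icc 1 (m + 2) \ {o, d}).filter (fun v => o < v ∧ v < d) = Ioo o d := by
    ext v; simp only [mem_filter, mem_sdiff, mem_Icc, mem_insert, mem_singleton, mem_Ioo]
    have := mem_Ioc.1 hd; omega
  rw [this, Nat.card_Ioo]

theorem neStat_insertEdge (hs : s ∈ matchingsOpenBelow m o) (ho : 1 ≤ o)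
    (hd : d ∈ Ioc o (m + 2)) : neStat (insertEdge o d s) = neStat s + (m + 2 - d) := by
  rw [mem_matchingsOpenBelow] at hs
  have hopen := fst_lt_of_mem_image_skipTwo (d := d) hs.2
  rw [insertEdge, neStat_insert hopen, neStat_image (strictMono_skipTwo o d),
    (isMatchingOn_image_skipTwo hs.1 ho hd).card_filter_snd (P := (d < ·))
      fun e he => by have := hopen e he; have := mem_Ioc.1 hd; omega]
  have : (Icc 1 (m + 2) \ {o, d}).filter (fun v => d < v) = Ioc d (m + 2) := by
    ext v; simp only [mem_filter, mem_sdiff, mem_Icc, mem_insert, mem_singleton, mem_Ioc]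
    have := mem_Ioc.1 hd; omega
  rw [this, Nat.card_Ioc]

theorem eq_of_insertEdge_eq (hs : ∀ e ∈ s, e.1 < o) {s' : Finset (ℕ × ℕ)}
    (hs' : ∀ e ∈ s', e.1 < o) (h : insertEdge o d s = insertEdge o d s') : s = s' := by
  have hφ := (strictMono_skipTwo o d).injective
  refine image_injective (hφ.prodMap hφ) ?_
  rw [← erase_insert fun h => lt_irrefl o (fst_lt_of_mem_image_skipTwo hs (o, d) h),
    ← erase_insert fun h => lt_irrefl o (fst_lt_of_mem_image_skipTwo hs' (o, d) h)]
  exact congrArg (erase · (o, d)) h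

theorem exists_insertEdge_eq (hs : s ∈ matchingsOpenBelow (m + 2) b) :
    ∃ o ∈ Ico 1 b, ∃ d ∈ Ioc o (m + 2), ∃ s' ∈ matchingsOpenBelow m o,
      insertEdge o d s' = s := by
  obtain ⟨hs, hsb⟩ := mem_matchingsOpenBelow.1 hs
  obtain ⟨e₀, he₀, -⟩ := hs.2 1 (by simp)
  obtain ⟨⟨o, d⟩, hod, hmax⟩ := s.exists_max_image Prod.fst ⟨e₀, he₀.1⟩
  obtain ⟨ho, hd, hlt⟩ := hs.1 _ hod
  dsimp only at hmax hlt
  rw [mem_Icc] at ho hd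
  have hX := hs.erase_edge hod
  have hXopen : ∀ e ∈ s.erase (o, d), e.1 < o := fun e he =>
    (hmax e (mem_of_mem_erase he)).lt_of_ne fun h =>
      ne_of_mem_erase he (hs.eq_of_mem_of_mem (mem_of_mem_erase he) hod (.inl rfl) (.inl h))
  have hsub :
      s.erase (o, d) ⊆ (Icc 1 m ×ˢ Icc 1 m).image (Prod.map (skipTwo o d) (skipTwo o d)) := by
    rw [prodMap_image_product, image_skipTwo_Icc ho.1 hlt hd.2]
    exact fun e he => mem_product.2 ⟨(hX.1 e he).1, (hX.1 e he).2.1⟩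
  obtain ⟨s', -, hs'⟩ := subset_image_iff.1 hsub
  refine ⟨o, mem_Ico.2 ⟨ho.1, hsb _ hod⟩, d, mem_Ioc.2 ⟨hlt, hd.2⟩, s', ?_, ?_⟩
  · refine mem_matchingsOpenBelow.2 ⟨?_, fun e he => ?_⟩
    · rwa [← isMatchingOn_image_iff (strictMono_skipTwo o d), hs',
        image_skipTwo_Icc ho.1 hlt hd.2]
    · have := hXopen _ (hs' ▸ mem_image_of_mem _ he)
      exact (le_skipTwo o d e.1).trans_lt this
  · rw [insertEdge, hs', insert_erase hod]

theorem sum_matchingsOpenBelow_add_two {M : Type*} [AddCommMonoid M] (m b : ℕ)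
    (G : Finset (ℕ × ℕ) → M) :
    ∑ s ∈ matchingsOpenBelow (m + 2) b, G s =
      ∑ o ∈ Ico 1 b, ∑ d ∈ Ioc o (m + 2), ∑ s ∈ matchingsOpenBelow m o,
        G (insertEdge o d s) := by
  simp_rw [← sum_product', sum_sigma']
  symm
  refine sum_nbij (fun x => insertEdge x.1 x.2.1 x.2.2) ?_ ?_ ?_ fun _ _ => rfl
  · simp only [mem_sigma, mem_product]
    exact fun x ⟨ho, hd, hs⟩ => insertEdge_mem_matchingsOpenBelow hs ho hd
  · rintro ⟨o, d, s⟩ hx ⟨o', d', s'⟩ hx' h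
    simp only [coe_sigma, Set.mem_sigma_iff, mem_coe, mem_product, mem_matchingsOpenBelow]
      at hx hx'
    simp only at h
    have h₁ : (o', d') ∈ insertEdge o d s := h ▸ mem_insert_self _ _
    have h₂ : (o, d) ∈ insertEdge o' d' s' := h ▸ mem_insert_self _ _
    replace h₁ := eq_or_fst_lt_of_mem_insertEdge hx.2.2.2 h₁
    replace h₂ := eq_or_fst_lt_of_mem_insertEdge hx'.2.2.2 h₂
    obtain ⟨rfl, rfl⟩ : o = o' ∧ d = d' := by
      simp only [Prod.ext_iff] at h₁ h₂
      omega
    rw [eq_of_insertEdge_eq hx.2.2.2 hx'.2.2.2 h]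
  · intro s hs
    obtain ⟨o, ho, d, hd, s', hs', rfl⟩ := exists_insertEdge_eq hs
    exact ⟨⟨o, d, s'⟩, mem_sigma.2 ⟨ho, mem_product.2 ⟨hd, hs'⟩⟩, rfl⟩

end InsertEdge

theorem sum_Ioc_sub_reflect {M : Type*} [AddCommMonoid M] (f : ℕ → M) (o N : ℕ) :
    ∑ d ∈ Ioc o N, f (d - o - 1) = ∑ d ∈ Ioc o N, f (N - d) := by
  refine sum_nbij' (fun d => N + o + 1 - d) (fun d => N + o + 1 - d) ?_ ?_ ?_ ?_ ?_ <;>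
    simp only [mem_Ioc] <;> intros <;> first | omega | congr 1; omega

theorem sum_crStat_eq_sum_neStat {M : Type*} [AddCommMonoid M] (m b : ℕ) (F : ℕ → M) :
    ∑ s ∈ matchingsOpenBelow m b, F (crStat s) =
      ∑ s ∈ matchingsOpenBelow m b, F (neStat s) := by
  induction m using Nat.strong_induction_on generalizing b F with
  | _ m ih =>
  match m with
  | 0 | 1 =>
    refine sum_congr rfl fun s hs => ?_
    obtain rfl : s = ∅ := eq_empty_of_forall_notMem fun e he => by
      have := (mem_matchingsOpenBelow.1 hs).1.1 e he
      simp only [mem_Icc] at this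
      omega
    rfl
  | m + 2 =>
    calc ∑ s ∈ matchingsOpenBelow (m + 2) b, F (crStat s)
        = ∑ o ∈ Ico 1 b, ∑ d ∈ Ioc o (m + 2), ∑ s ∈ matchingsOpenBelow m o,
            F (crStat s + (d - o - 1)) := by
          rw [sum_matchingsOpenBelow_add_two]
          refine sum_congr rfl fun o ho => sum_congr rfl fun d hd => sum_congr rfl fun s hs => ?_
          rw [crStat_insertEdge hs (mem_Ico.1 ho).1 hd]
      _ = ∑ o ∈ Ico 1 b, ∑ d ∈ Ioc o (m + 2), ∑ s ∈ matchingsOpenBelow m o,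
            F (neStat s + (d - o - 1)) :=
          sum_congr rfl fun o _ => sum_congr rfl fun d _ =>
            ih m (by omega) o fun j => F (j + (d - o - 1))
      _ = ∑ o ∈ Ico 1 b, ∑ d ∈ Ioc o (m + 2), ∑ s ∈ matchingsOpenBelow m o,
            F (neStat s + (m + 2 - d)) := by
          refine sum_congr rfl fun o _ => ?_
          rw [sum_comm, sum_comm (s := Ioc o (m + 2))]
          exact sum_congr rfl fun s _ =>
            sum_Ioc_sub_reflect (fun j => F (neStat s + j)) o (m + 2)
      _ = ∑ s ∈ matchingsOpenBelow (m + 2) b, F (neStat s) := by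
          rw [sum_matchingsOpenBelow_add_two]
          refine sum_congr rfl fun o ho => sum_congr rfl fun d hd => sum_congr rfl fun s hs => ?_
          rw [neStat_insertEdge hs (mem_Ico.1 ho).1 hd]

theorem isMatching_iff_mem_matchingsOpenBelow {n : ℕ} {s : Finset (ℕ × ℕ)} :
    IsMatching n s ↔ s ∈ matchingsOpenBelow (2 * n) (2 * n + 1) := by
  rw [mem_matchingsOpenBelow]
  constructor
  · rintro ⟨-, hedge, hcover⟩
    refine ⟨⟨fun e he => ?_, fun v hv => hcover v (mem_Icc.1 hv).1 (mem_Icc.1 hv).2⟩,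
      fun e he => by have := hedge e he; omega⟩
    have := hedge e he
    simp only [mem_Icc]
    omega
  · rintro ⟨hs, -⟩
    refine ⟨?_, fun e he => ?_, fun v h₁ h₂ => hs.2 v (mem_Icc.2 ⟨h₁, h₂⟩)⟩
    · have := hs.two_mul_card
      rw [Nat.card_Icc] at this
      omega
    · have := hs.1 e he
      simp only [mem_Icc] at this
      omega

theorem natCard_isMatching_eq_sum (n k : ℕ) (f : Finset (ℕ × ℕ) → ℕ) :
    Nat.card {s : Finset (ℕ × ℕ) // IsMatching n s ∧ f s = k} =
      ∑ s ∈ matchingsOpenBelow (2 * n) (2 * n + 1), if f s = k then 1 else 0 := by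
  rw [← card_filter, ← Nat.card_eq_finsetCard]
  exact Nat.card_congr <| Equiv.subtypeEquivRight fun s => by
    rw [mem_filter, isMatching_iff_mem_matchingsOpenBelow]

theorem card_crossings_eq_card_nestings_general (k n : ℕ) :
    Nat.card {s : Finset (ℕ × ℕ) // IsMatching n s ∧ crStat s = k}
      = Nat.card {s : Finset (ℕ × ℕ) // IsMatching n s ∧ neStat s = k} := by
  rw [natCard_isMatching_eq_sum, natCard_isMatching_eq_sum]
  exact sum_crStat_eq_sum_neStat _ _ fun j => if j = k then 1 else 0

/-- de Sainte-Catherine: for every `k ≥ 0` and `n ≥ 1`, there are as many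
matchings on `[2n]` with exactly `k` crossings as those with exactly `k` nestings. -/
theorem card_crossings_eq_card_nestings (k n : ℕ) (hn : 1 ≤ n) :
    Nat.card {s : Finset (ℕ × ℕ) // IsMatching n s ∧ crStat s = k}
      = Nat.card {s : Finset (ℕ × ℕ) // IsMatching n s ∧ neStat s = k} :=
  card_crossings_eq_card_nestings_general k n
end

section
/- For every k, l ∈ ℕ₀ and n ∈ ℕ, the number of matchings on [2n] with exactly k crossings and exactly l nestings equals the number of matchings on [2n] with exactly l crossings and exactly k nestings; that is, the joint statistic (cr, ne) on M(n) is symmetric. -/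
open Finset

lemma Finset.card_filter_lt_eq_count (A : Finset ℕ) (o : ℕ) :
    #{x ∈ A | x < o} = Nat.count (· ∈ A) o := by
  rw [Nat.count_eq_card_filter_range]
  congr 1
  ext x
  simp [and_comm]

lemma Finset.injOn_card_filter_lt (A : Finset ℕ) : Set.InjOn (fun o => #{x ∈ A | x < o}) A :=
  fun _ ha _ hb hab => Nat.count_injective (p := (· ∈ A)) ha hb <| by
    simpa only [Finset.card_filter_lt_eq_count] using hab

lemma Finset.exists_mem_card_filter_lt_eq (A : Finset ℕ) {r : ℕ} (hr : r < #A) :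
    ∃ o ∈ A, #{x ∈ A | x < o} = r := by
  have hfin : (Set.ofPred (· ∈ A)).Finite := A.finite_toSet
  have hr' : r < hfin.toFinset.card := by simpa [Set.ofPred] using hr
  exact ⟨Nat.nth (· ∈ A) r, Nat.nth_mem_of_lt_card hfin hr',
    by rw [Finset.card_filter_lt_eq_count, Nat.count_nth_of_lt_card_finite hfin hr']⟩

lemma Finset.card_filter_lt_add_card_filter_gt (A : Finset ℕ) {x : ℕ} (hx : x ∈ A) :
    #{a ∈ A | a < x} + 1 + #{a ∈ A | x < a} = #A := by
  have hge : {a ∈ A | ¬ a < x} = insert x {a ∈ A | x < a} := by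
    ext a
    simp only [mem_filter, mem_insert]
    grind
  rw [← card_filter_add_card_filter_not (s := A) (· < x), hge, card_insert_of_notMem (by simp)]
  omega

lemma Finset.card_filter_product_eq_sum {α β : Type*} (s : Finset α) (t : Finset β)
    (p : α × β → Prop) [DecidablePred p] :
    #{x ∈ s ×ˢ t | p x} = ∑ a ∈ s, #{b ∈ t | p (a, b)} := by
  simp only [card_filter, sum_product]

lemma Finset.card_filter_product_eq_sum_right {α β : Type*} (s : Finset α) (t : Finset β)
    (p : α × β → Prop) [DecidablePred p] :
    #{x ∈ s ×ˢ t | p x} = ∑ b ∈ t, #{a ∈ s | p (a, b)} := by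
  simp only [card_filter, sum_product_right]

lemma Finset.card_filter_image_of_injOn {α β : Type*} [DecidableEq β] {s : Finset α} {f : α → β}
    (hf : Set.InjOn f s) (p : β → Prop) [DecidablePred p] :
    #{b ∈ s.image f | p b} = #{a ∈ s | p (f a)} := by
  rw [filter_image, card_image_of_injOn (hf.mono (filter_subset _ _))]

lemma Finset.image_erase_of_injOn {α β : Type*} [DecidableEq α] [DecidableEq β] {s : Finset α}
    {f : α → β} (hf : Set.InjOn f s) {a : α} (ha : a ∈ s) :
    (s.erase a).image f = (s.image f).erase (f a) := by
  refine Subset.antisymm (fun y hy => ?_) (erase_image_subset_image_erase f s a)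
  obtain ⟨b, hb, rfl⟩ := mem_image.1 hy
  obtain ⟨hba, hbs⟩ := mem_erase.1 hb
  exact mem_erase.2 ⟨fun h => hba (hf hbs ha h), mem_image_of_mem f hbs⟩

def openers (s : Finset (ℕ × ℕ)) : Finset ℕ := s.image Prod.fst

def closers (s : Finset (ℕ × ℕ)) : Finset ℕ := s.image Prod.snd

lemma mem_openers_union_closers {s : Finset (ℕ × ℕ)} {v : ℕ} :
    v ∈ openers s ∪ closers s ↔ ∃ e ∈ s, v = e.1 ∨ v = e.2 := by
  simp only [openers, closers, mem_union, mem_image, ← exists_or, ← and_or_left, eq_comm]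

structure IsArcDiagram (s : Finset (ℕ × ℕ)) : Prop where
  fst_lt_snd : ∀ e ∈ s, e.1 < e.2
  injOn_fst : Set.InjOn Prod.fst (s : Set (ℕ × ℕ))
  injOn_snd : Set.InjOn Prod.snd (s : Set (ℕ × ℕ))
  disjoint : Disjoint (openers s) (closers s)

def openersAt (s : Finset (ℕ × ℕ)) (v : ℕ) : Finset ℕ :=
  {e ∈ s | e.1 < v ∧ v ≤ e.2}.image Prod.fst

def heightAt (s : Finset (ℕ × ℕ)) (v : ℕ) : ℕ := #(openersAt s v)

def partnerAt (s : Finset (ℕ × ℕ)) (c : ℕ) : ℕ := {e ∈ s | e.2 = c}.sup Prod.fst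

def rankAt (s : Finset (ℕ × ℕ)) (c : ℕ) : ℕ := #{a ∈ openersAt s c | a < partnerAt s c}

section Insert

variable {t : Finset (ℕ × ℕ)} {o c v : ℕ}

lemma openers_insert : openers (insert (o, c) t) = insert o (openers t) := image_insert ..

lemma closers_insert : closers (insert (o, c) t) = insert c (closers t) := image_insert ..

lemma openersAt_insert_of_lt (hcv : c < v) : openersAt (insert (o, c) t) v = openersAt t v := by
  rw [openersAt, openersAt, filter_insert, if_neg (by omega)]

lemma partnerAt_insert_of_ne (hcv : c ≠ v) : partnerAt (insert (o, c) t) v = partnerAt t v := by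
  rw [partnerAt, partnerAt, filter_insert, if_neg hcv]

lemma rankAt_insert_of_lt (hcv : c < v) : rankAt (insert (o, c) t) v = rankAt t v := by
  rw [rankAt, rankAt, openersAt_insert_of_lt hcv, partnerAt_insert_of_ne hcv.ne]

lemma IsArcDiagram.insert (ht : IsArcDiagram t) (hoc : o < c) (ho : o ∉ openers t ∪ closers t)
    (hc : c ∉ openers t ∪ closers t) : IsArcDiagram (insert (o, c) t) where
  fst_lt_snd := forall_mem_insert _ _ _ |>.2 ⟨hoc, ht.fst_lt_snd⟩
  injOn_fst := by
    rw [coe_insert, Set.injOn_insert fun h => ho (mem_union_left _ (mem_image_of_mem _ h))]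
    exact ⟨ht.injOn_fst, fun h => ho (mem_union_left _ (by simpa [openers] using h))⟩
  injOn_snd := by
    rw [coe_insert, Set.injOn_insert fun h => hc (mem_union_right _ (mem_image_of_mem _ h))]
    exact ⟨ht.injOn_snd, fun h => hc (mem_union_right _ (by simpa [closers] using h))⟩
  disjoint := by
    rw [openers_insert, closers_insert, disjoint_insert_left, disjoint_insert_right, mem_insert,
      not_or]
    exact ⟨⟨hoc.ne, fun h => ho (mem_union_right _ h)⟩, fun h => hc (mem_union_left _ h),
      ht.disjoint⟩

end Insert

namespace IsArcDiagram

variable {s : Finset (ℕ × ℕ)} {e : ℕ × ℕ}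

lemma mono (hs : IsArcDiagram s) {t : Finset (ℕ × ℕ)} (hts : t ⊆ s) : IsArcDiagram t where
  fst_lt_snd e he := hs.fst_lt_snd e (hts he)
  injOn_fst := hs.injOn_fst.mono hts
  injOn_snd := hs.injOn_snd.mono hts
  disjoint := hs.disjoint.mono (image_subset_image hts) (image_subset_image hts)

lemma partnerAt_eq (hs : IsArcDiagram s) (he : e ∈ s) : partnerAt s e.2 = e.1 := by
  have : {f ∈ s | f.2 = e.2} = {e} := by
    ext f
    simp only [mem_filter, mem_singleton]
    exact ⟨fun ⟨hf, hfe⟩ => hs.injOn_snd hf he hfe, by rintro rfl; exact ⟨he, rfl⟩⟩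
  simp [partnerAt, this]

lemma fst_mem_openersAt (hs : IsArcDiagram s) (he : e ∈ s) : e.1 ∈ openersAt s e.2 :=
  mem_image_of_mem _ (mem_filter.2 ⟨he, hs.fst_lt_snd e he, le_rfl⟩)

lemma card_filter_openersAt (hs : IsArcDiagram s) (v : ℕ) (p : ℕ → Prop) [DecidablePred p] :
    #{a ∈ openersAt s v | p a} = #{f ∈ s | (f.1 < v ∧ v ≤ f.2) ∧ p f.1} := by
  rw [openersAt, card_filter_image_of_injOn (hs.injOn_fst.mono (filter_subset _ _)), filter_filter]

lemma rankAt_add_card_filter_gt (hs : IsArcDiagram s) (he : e ∈ s) :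
    rankAt s e.2 + 1 + #{a ∈ openersAt s e.2 | e.1 < a} = heightAt s e.2 := by
  rw [rankAt, hs.partnerAt_eq he]
  exact card_filter_lt_add_card_filter_gt _ (hs.fst_mem_openersAt he)

lemma rankAt_lt_heightAt (hs : IsArcDiagram s) {c : ℕ} (hc : c ∈ closers s) :
    rankAt s c < heightAt s c := by
  obtain ⟨e, he, rfl⟩ := mem_image.1 hc
  have := hs.rankAt_add_card_filter_gt he
  omega

lemma card_openers (hs : IsArcDiagram s) : #(openers s) = #s := card_image_of_injOn hs.injOn_fst

lemma card_closers (hs : IsArcDiagram s) : #(closers s) = #s := card_image_of_injOn hs.injOn_snd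

lemma eq_of_shared_endpoint (hs : IsArcDiagram s) {f : ℕ × ℕ} {v : ℕ} (he : e ∈ s) (hf : f ∈ s)
    (hve : v = e.1 ∨ v = e.2) (hvf : v = f.1 ∨ v = f.2) : e = f := by
  have hno : ∀ {g h}, g ∈ s → h ∈ s → g.1 ≠ h.2 := fun hg hh hgh =>
    disjoint_left.1 hs.disjoint (mem_image_of_mem _ hg) (hgh ▸ mem_image_of_mem _ hh)
  rcases hve with rfl | rfl <;> rcases hvf with h | h
  · exact hs.injOn_fst he hf h
  · exact absurd h (hno he hf)
  · exact absurd h.symm (hno hf he)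
  · exact hs.injOn_snd he hf h

lemma snd_lt_snd_of_le (hs : IsArcDiagram s) {f : ℕ × ℕ} (he : e ∈ s) (hf : f ∈ s)
    (hle : e.2 ≤ f.2) (hne : e.1 ≠ f.1) : e.2 < f.2 :=
  hle.lt_of_ne fun h => hne (congrArg Prod.fst (hs.injOn_snd he hf h))

lemma neStat_eq_sum (hs : IsArcDiagram s) : neStat s = ∑ c ∈ closers s, rankAt s c := by
  rw [neStat, card_filter_product_eq_sum_right, closers, sum_image hs.injOn_snd]
  refine sum_congr rfl fun f hf => ?_
  rw [rankAt, hs.partnerAt_eq hf, hs.card_filter_openersAt]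
  refine congrArg card (filter_congr fun e he => ?_)
  constructor
  · rintro ⟨h1, h2⟩
    exact ⟨⟨h1.trans (hs.fst_lt_snd f hf), h2.le⟩, h1⟩
  · rintro ⟨⟨-, h2⟩, h1⟩
    exact ⟨h1, hs.snd_lt_snd_of_le hf he h2 h1.ne'⟩

lemma crStat_eq_sum (hs : IsArcDiagram s) :
    crStat s = ∑ c ∈ closers s, (heightAt s c - 1 - rankAt s c) := by
  rw [crStat, card_filter_product_eq_sum, closers, sum_image hs.injOn_snd]
  refine sum_congr rfl fun e he => ?_
  dsimp only
  have hsplit := hs.rankAt_add_card_filter_gt he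
  have hcross : #{a ∈ openersAt s e.2 | e.1 < a}
      = #{f ∈ s | e.1 < f.1 ∧ f.1 < e.2 ∧ e.2 < f.2} := by
    rw [hs.card_filter_openersAt]
    refine congrArg card (filter_congr fun f hf => ?_)
    constructor
    · rintro ⟨⟨h2, h3⟩, h1⟩
      exact ⟨h1, h2, hs.snd_lt_snd_of_le he hf h3 h1.ne⟩
    · rintro ⟨h1, h2, h3⟩
      exact ⟨⟨h2, h3.le⟩, h1⟩
  omega

lemma heightAt_add_card_filter_closers (hs : IsArcDiagram s) (c : ℕ) :
    heightAt s c + #{x ∈ closers s | x < c} = #{x ∈ openers s | x < c} := by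
  rw [heightAt, openersAt, card_image_of_injOn (hs.injOn_fst.mono (filter_subset _ _)), closers,
    openers, card_filter_image_of_injOn hs.injOn_snd, card_filter_image_of_injOn hs.injOn_fst,
    ← card_filter_add_card_filter_not (s := {e ∈ s | e.1 < c}) (c ≤ ·.2), filter_filter,
    filter_filter]
  congr 1
  refine congrArg card (filter_congr fun e he => ?_)
  have := hs.fst_lt_snd e he
  omega

lemma heightAt_eq_of_openers_closers {t : Finset (ℕ × ℕ)} (hs : IsArcDiagram s)
    (ht : IsArcDiagram t) (hopen : openers t = openers s) (hclose : closers t = closers s)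
    (c : ℕ) : heightAt t c = heightAt s c := by
  have hs' := hs.heightAt_add_card_filter_closers c
  have ht' := ht.heightAt_add_card_filter_closers c
  rw [hopen, hclose] at ht'
  omega

end IsArcDiagram

lemma openersAt_eq_filter_openers {s : Finset (ℕ × ℕ)} {c : ℕ} (hc : ∀ e ∈ s, c ≤ e.2) :
    openersAt s c = {x ∈ openers s | x < c} := by
  rw [openersAt, openers, filter_image]
  exact congrArg _ (filter_congr fun e he => and_iff_left (hc e he))

theorem IsArcDiagram.eq_of_rankAt_eq {s t : Finset (ℕ × ℕ)} (hs : IsArcDiagram s)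
    (ht : IsArcDiagram t) (hopen : openers s = openers t) (hclose : closers s = closers t)
    (hrank : ∀ c ∈ closers s, rankAt s c = rankAt t c) : s = t := by
  obtain ⟨C, hC⟩ : ∃ C, closers s = C := ⟨_, rfl⟩
  have hC' : closers t = C := hclose.symm.trans hC
  rw [hC] at hrank
  clear hclose
  induction C using Finset.induction_on_min generalizing s t with
  | empty => rw [closers, image_eq_empty] at hC hC'; rw [hC, hC']
  | insert c C hmin ih =>
    obtain ⟨⟨o, c₁⟩, he, hc₁ : c₁ = c⟩ := mem_image.1 (hC ▸ mem_insert_self c C : c ∈ closers s)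
    obtain ⟨⟨o', c₂⟩, hf, hc₂ : c₂ = c⟩ := mem_image.1 (hC' ▸ mem_insert_self c C : c ∈ closers t)
    subst c₁ c₂
    have hle {u : Finset (ℕ × ℕ)} (hu : closers u = Insert.insert c C) : ∀ e ∈ u, c ≤ e.2 :=
      fun e he => (mem_insert.1 (hu ▸ mem_image_of_mem _ he)).elim (·.ge) (hmin _ · |>.le)
    have hopen_c : openersAt s c = openersAt t c := by
      rw [openersAt_eq_filter_openers (hle hC), openersAt_eq_filter_openers (hle hC'), hopen]
    have hoo' : o = o' := by
      have h := hrank c (mem_insert_self c C)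
      rw [rankAt, rankAt, hs.partnerAt_eq he, ht.partnerAt_eq hf, hopen_c] at h
      exact injOn_card_filter_lt _ (hopen_c ▸ hs.fst_mem_openersAt he)
        (ht.fst_mem_openersAt hf) h
    subst hoo'
    have hcC : c ∉ C := fun h => (hmin c h).false
    suffices s.erase (o, c) = t.erase (o, c) by
      rw [← insert_erase he, ← insert_erase hf, this]
    refine ih (hs.mono (erase_subset _ _)) (ht.mono (erase_subset _ _)) ?_ ?_ ?_ ?_
    · rw [openers, openers, image_erase_of_injOn hs.injOn_fst he,
        image_erase_of_injOn ht.injOn_fst hf]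
      exact congrArg (·.erase o) hopen
    · intro c' hc'
      have h := hrank c' (mem_insert_of_mem hc')
      rwa [← insert_erase he, ← insert_erase hf, rankAt_insert_of_lt (hmin c' hc'),
        rankAt_insert_of_lt (hmin c' hc')] at h
    · rw [closers, image_erase_of_injOn hs.injOn_snd he, ← closers, hC, erase_insert hcC]
    · rw [closers, image_erase_of_injOn ht.injOn_snd hf, ← closers, hC', erase_insert hcC]

theorem exists_isArcDiagram_rankAt_eq (r : ℕ → ℕ) {O C : Finset ℕ} (hdisj : Disjoint O C)
    (hcard : #O = #C) (hr : ∀ c ∈ C, r c + #{x ∈ C | x < c} < #{x ∈ O | x < c}) :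
    ∃ t, IsArcDiagram t ∧ openers t = O ∧ closers t = C ∧ ∀ c ∈ C, rankAt t c = r c := by
  induction C using Finset.induction_on_min generalizing O with
  | empty =>
    rw [card_empty, card_eq_zero] at hcard
    exact ⟨∅, ⟨by simp, by simp, by simp, by simp [openers]⟩, by simp [hcard, openers], rfl,
      by simp⟩
  | insert c C hmin ih =>
    have hcC : c ∉ C := fun h => (hmin c h).false
    have hbelow_c : {x ∈ insert c C | x < c} = ∅ :=
      filter_eq_empty_iff.2 fun x hx => by
        rcases mem_insert.1 hx with rfl | hx
        exacts [lt_irrefl x, (hmin x hx).not_gt]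
    have hrc := hr c (mem_insert_self c C)
    rw [hbelow_c, card_empty, add_zero] at hrc
    -- every opener below the smallest closer `c` is still open at `c`
    obtain ⟨o, hoA, hro⟩ := exists_mem_card_filter_lt_eq _ hrc
    obtain ⟨hoO, hoc⟩ := mem_filter.1 hoA
    have hcO : c ∉ O := disjoint_right.1 hdisj (mem_insert_self c C)
    have hoC : o ∉ C := fun h => disjoint_left.1 hdisj hoO (mem_insert_of_mem h)
    obtain ⟨t, ht, hto, htc, htr⟩ := ih (O := O.erase o)
      (disjoint_of_subset_left (erase_subset o O) (hdisj.mono_right (subset_insert c C)))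
      (by rw [card_erase_of_mem hoO, hcard, card_insert_of_notMem hcC, Nat.add_sub_cancel])
      (fun c' hc' => by
        have h := hr c' (mem_insert_of_mem hc')
        have hoc' : o ∈ {x ∈ O | x < c'} := mem_filter.2 ⟨hoO, hoc.trans (hmin c' hc')⟩
        rw [filter_insert, if_pos (hmin c' hc'), card_insert_of_notMem (by simp [hcC])] at h
        rw [filter_erase, card_erase_of_mem hoc']
        omega)
    have hdiag : IsArcDiagram (insert (o, c) t) :=
      ht.insert hoc (by simp [hto, htc, hoC]) (by simp [hto, htc, hcO, hcC])
    refine ⟨_, hdiag, by rw [openers_insert, hto, insert_erase hoO],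
      by rw [closers_insert, htc], forall_mem_insert _ _ _ |>.2 ⟨?_, fun c' hc' => ?_⟩⟩
    · have hle : ∀ e ∈ insert (o, c) t, c ≤ e.2 := by
        refine forall_mem_insert _ _ _ |>.2 ⟨le_rfl, fun e he => (hmin _ ?_).le⟩
        exact htc ▸ mem_image_of_mem _ he
      rw [rankAt, openersAt_eq_filter_openers hle, hdiag.partnerAt_eq (mem_insert_self _ t),
        openers_insert, hto, insert_erase hoO]
      exact hro
    · rw [rankAt_insert_of_lt (hmin c' hc'), htr c' hc']

lemma isMatching_iff {n : ℕ} {s : Finset (ℕ × ℕ)} :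
    IsMatching n s ↔ IsArcDiagram s ∧ openers s ∪ closers s = Icc 1 (2 * n) := by
  constructor
  · rintro ⟨-, hedge, huniq⟩
    have hs : IsArcDiagram s := by
      have hshare : ∀ {e f v}, e ∈ s → f ∈ s → (v = e.1 ∨ v = e.2) → (v = f.1 ∨ v = f.2) →
          e = f := fun {e _ v} he hf hve hvf => by
        have : 1 ≤ v ∧ v ≤ 2 * n := by have := hedge e he; rcases hve with rfl | rfl <;> omega
        exact (huniq v this.1 this.2).unique ⟨he, hve⟩ ⟨hf, hvf⟩
      refine ⟨fun e he => (hedge e he).1, fun e he f hf h => hshare he hf (.inl rfl) (.inl h),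
        fun e he f hf h => hshare he hf (.inr rfl) (.inr h), disjoint_left.2 ?_⟩
      intro v hvo hvc
      obtain ⟨e, he, rfl⟩ := mem_image.1 hvo
      obtain ⟨f, hf, hfe⟩ := mem_image.1 hvc
      obtain rfl := hshare he hf (.inl rfl) (.inr hfe.symm)
      exact (hedge e he).1.ne hfe.symm
    refine ⟨hs, Subset.antisymm ?_ fun v hv => ?_⟩
    · intro v hv
      obtain ⟨e, he, hve⟩ := mem_openers_union_closers.1 hv
      have := hedge e he
      rw [mem_Icc]
      omega
    · obtain ⟨hv1, hv2⟩ := mem_Icc.1 hv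
      obtain ⟨e, he, -⟩ := huniq v hv1 hv2
      exact mem_openers_union_closers.2 ⟨e, he⟩
  · rintro ⟨hs, hunion⟩
    refine ⟨?_, fun e he => ?_, fun v hv1 hv2 => ?_⟩
    · have := congrArg card hunion
      rw [card_union_of_disjoint hs.disjoint, hs.card_openers, hs.card_closers,
        Nat.card_Icc] at this
      omega
    · have h1 : e.1 ∈ Icc 1 (2 * n) := hunion ▸ mem_union_left _ (mem_image_of_mem _ he)
      have h2 : e.2 ∈ Icc 1 (2 * n) := hunion ▸ mem_union_right _ (mem_image_of_mem _ he)
      exact ⟨hs.fst_lt_snd e he, (mem_Icc.1 h1).1, (mem_Icc.1 h2).2⟩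
    · have hv : v ∈ openers s ∪ closers s := hunion ▸ mem_Icc.2 ⟨hv1, hv2⟩
      obtain ⟨e, he, hve⟩ := mem_openers_union_closers.1 hv
      exact ⟨e, ⟨he, hve⟩, fun f ⟨hf, hvf⟩ => hs.eq_of_shared_endpoint hf he hvf hve⟩

def IsRankFlip (s t : Finset (ℕ × ℕ)) : Prop :=
  openers t = openers s ∧ closers t = closers s ∧
    ∀ c ∈ closers s, rankAt s c + rankAt t c + 1 = heightAt s c

namespace IsRankFlip

variable {s t : Finset (ℕ × ℕ)}

lemma symm (hs : IsArcDiagram s) (ht : IsArcDiagram t) (h : IsRankFlip s t) :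
    IsRankFlip t s := by
  obtain ⟨hopen, hclose, hrank⟩ := h
  refine ⟨hopen.symm, hclose.symm, fun c hc => ?_⟩
  rw [hs.heightAt_eq_of_openers_closers ht hopen hclose, add_comm (rankAt t c)]
  exact hrank c (hclose ▸ hc)

lemma unique {t' : Finset (ℕ × ℕ)} (ht : IsArcDiagram t) (ht' : IsArcDiagram t')
    (h : IsRankFlip s t) (h' : IsRankFlip s t') : t = t' := by
  refine ht.eq_of_rankAt_eq ht' (h.1.trans h'.1.symm) (h.2.1.trans h'.2.1.symm) fun c hc => ?_
  have := h.2.2 c (h.2.1 ▸ hc)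
  have := h'.2.2 c (h.2.1 ▸ hc)
  omega

lemma crStat_eq (hs : IsArcDiagram s) (ht : IsArcDiagram t) (h : IsRankFlip s t) :
    crStat t = neStat s := by
  rw [ht.crStat_eq_sum, hs.neStat_eq_sum, h.2.1]
  refine sum_congr rfl fun c hc => ?_
  have := h.2.2 c hc
  rw [hs.heightAt_eq_of_openers_closers ht h.1 h.2.1]
  omega

end IsRankFlip

lemma IsArcDiagram.exists_isRankFlip {s : Finset (ℕ × ℕ)} (hs : IsArcDiagram s) :
    ∃ t, IsArcDiagram t ∧ IsRankFlip s t := by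
  obtain ⟨t, ht, hopen, hclose, hrank⟩ :=
    exists_isArcDiagram_rankAt_eq (fun c => heightAt s c - 1 - rankAt s c) hs.disjoint
      (by rw [hs.card_openers, hs.card_closers]) fun c hc => by
        have := hs.rankAt_lt_heightAt hc
        have := hs.heightAt_add_card_filter_closers c
        omega
  refine ⟨t, ht, hopen, hclose, fun c hc => ?_⟩
  have := hs.rankAt_lt_heightAt hc
  rw [hrank c hc]
  omega

noncomputable def rankFlip (s : Finset (ℕ × ℕ)) : Finset (ℕ × ℕ) :=
  Classical.epsilon fun t => IsArcDiagram t ∧ IsRankFlip s t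

namespace IsArcDiagram

variable {s : Finset (ℕ × ℕ)}

lemma rankFlip_spec (hs : IsArcDiagram s) : IsArcDiagram (rankFlip s) ∧ IsRankFlip s (rankFlip s) :=
  Classical.epsilon_spec hs.exists_isRankFlip

lemma rankFlip_rankFlip (hs : IsArcDiagram s) : rankFlip (rankFlip s) = s := by
  obtain ⟨ht, h⟩ := hs.rankFlip_spec
  obtain ⟨htt, h'⟩ := ht.rankFlip_spec
  exact h'.unique htt hs (h.symm hs ht)

lemma crStat_rankFlip (hs : IsArcDiagram s) : crStat (rankFlip s) = neStat s :=
  hs.rankFlip_spec.2.crStat_eq hs hs.rankFlip_spec.1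

lemma neStat_rankFlip (hs : IsArcDiagram s) : neStat (rankFlip s) = crStat s := by
  obtain ⟨ht, h⟩ := hs.rankFlip_spec
  exact ((h.symm hs ht).crStat_eq ht hs).symm

end IsArcDiagram

lemma IsMatching.rankFlip {n : ℕ} {s : Finset (ℕ × ℕ)} (hm : IsMatching n s) :
    IsMatching n (rankFlip s) := by
  obtain ⟨hs, hunion⟩ := isMatching_iff.1 hm
  obtain ⟨ht, hopen, hclose, -⟩ := hs.rankFlip_spec
  exact isMatching_iff.2 ⟨ht, by rw [hopen, hclose, hunion]⟩

theorem card_joint_statistic_symmetric_general (k l n : ℕ) :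
    Nat.card {s : Finset (ℕ × ℕ) // IsMatching n s ∧ crStat s = k ∧ neStat s = l}
      = Nat.card {s : Finset (ℕ × ℕ) // IsMatching n s ∧ crStat s = l ∧ neStat s = k} := by
  have hflip {k l : ℕ} (s : {s : Finset (ℕ × ℕ) // IsMatching n s ∧ crStat s = k ∧ neStat s = l}) :
      IsMatching n (rankFlip s) ∧ crStat (rankFlip s) = l ∧ neStat (rankFlip s) = k := by
    obtain ⟨s, hm, rfl, rfl⟩ := s
    have hs := (isMatching_iff.1 hm).1
    exact ⟨hm.rankFlip, hs.crStat_rankFlip, hs.neStat_rankFlip⟩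
  have hinv {k l : ℕ} (s : {s : Finset (ℕ × ℕ) // IsMatching n s ∧ crStat s = k ∧ neStat s = l}) :
      rankFlip (rankFlip s) = s :=
    (isMatching_iff.1 s.2.1).1.rankFlip_rankFlip
  exact Nat.card_congr
    { toFun s := ⟨rankFlip s, hflip s⟩
      invFun s := ⟨rankFlip s, hflip s⟩
      left_inv s := Subtype.ext (hinv s)
      right_inv s := Subtype.ext (hinv s) }

/-- symmetry of the joint statistic: for every `k, l ≥ 0` and `n ≥ 1`, there are
as many matchings on `[2n]` with `k` crossings and `l` nestings as those with `l` crossings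
and `k` nestings. -/
theorem card_joint_statistic_symmetric (k l n : ℕ) (hn : 1 ≤ n) :
    Nat.card {s : Finset (ℕ × ℕ) // IsMatching n s ∧ crStat s = k ∧ neStat s = l}
      = Nat.card {s : Finset (ℕ × ℕ) // IsMatching n s ∧ crStat s = l ∧ neStat s = k} :=
  card_joint_statistic_symmetric_general k l n
end

section
/- For every k ∈ ℕ₀ and every n ≥ 2, the number of matchings on [2n] which have exactly k crossings and whose last two edges are nested equals the number of matchings on [2n] which have exactly k nestings and whose last two edges are separated (neither crossing nor nested). -/
/-- Two edges are nested (one covers the other). -/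
def NestedPair (e f : ℕ × ℕ) : Prop := (e.1 < f.1 ∧ f.2 < e.2) ∨ (f.1 < e.1 ∧ e.2 < f.2)

/-- Two edges are separated: neither crossing nor nested. -/
def SeparatedPair (e f : ℕ × ℕ) : Prop := e.2 < f.1 ∨ f.2 < e.1

/-- `e` and `f` are the last two edges of `s`: the two edges whose smaller elements (first
coordinates) are the two largest among the smaller elements of all edges. -/
def AreLastTwo (s : Finset (ℕ × ℕ)) (e f : ℕ × ℕ) : Prop :=
  e ∈ s ∧ f ∈ s ∧ e ≠ f ∧ ∀ g ∈ s, g ≠ e → g ≠ f → g.1 < e.1 ∧ g.1 < f.1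


/-!
A matching on `[2m + 2]` arises from a unique matching on `[2m]` by adding a last edge, one whose
opener follows all other openers. This edge is determined by the numbers `u` and `v ≤ u` of old
vertices after its opener and after its closer, and it creates `u - v` crossings and `v` nestings.
Replacing `v` by `u - v` at every step is therefore an involution exchanging `cr` and `ne`.

If the last two edges have parameters `(u₁, v₁)` and `(u₂, v₂)`, they are nested iff `v₁ < v₂` and
separated iff `u₂ ≤ v₁`. Applying the involution below the last edge and replacing `(u₂, v₂)` by
`(u₂ - v₁ - 1, u₂ - v₂)` maps the matchings of the first kind with `k` crossings bijectively onto
those of the second kind with `k` nestings.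
-/

namespace Finset

theorem card_filter_product_insert {α : Type*} [DecidableEq α] {a : α} {t : Finset α}
    (ha : a ∉ t) (P : α × α → Prop) [DecidablePred P] :
    ((insert a t ×ˢ insert a t).filter P).card =
      ((t ×ˢ t).filter P).card + (t.filter fun e => P (a, e)).card
        + (t.filter fun e => P (e, a)).card + if P (a, a) then 1 else 0 := by
  simp only [card_filter, sum_product, sum_insert ha, sum_add_distrib]
  ring

theorem card_filter_product_image {α β : Type*} [DecidableEq β] {f : α → β}
    {s : Finset α} (hf : Set.InjOn f s) (P : β × β → Prop) [DecidablePred P] :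
    ((s.image f ×ˢ s.image f).filter P).card =
      ((s ×ˢ s).filter fun p => P (f p.1, f p.2)).card := by
  rw [← prodMap_image_product, filter_image, card_image_of_injOn]
  · rfl
  · exact (hf.prodMap hf).mono fun p hp => mem_product.mp (mem_filter.mp hp).1

end Finset

theorem crStat_image_prodMap {f : ℕ → ℕ} (hf : StrictMono f) (s : Finset (ℕ × ℕ)) :
    crStat (s.image (Prod.map f f)) = crStat s := by
  rw [crStat, Finset.card_filter_product_image (hf.injective.prodMap hf.injective).injOn]
  simp [crStat, hf.lt_iff_lt]

theorem neStat_image_prodMap {f : ℕ → ℕ} (hf : StrictMono f) (s : Finset (ℕ × ℕ)) :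
    neStat (s.image (Prod.map f f)) = neStat s := by
  rw [neStat, Finset.card_filter_product_image (hf.injective.prodMap hf.injective).injOn]
  simp [neStat, hf.lt_iff_lt]

theorem crStat_insert_of_forall_fst_lt {o c : ℕ} {t : Finset (ℕ × ℕ)} (ht : ∀ e ∈ t, e.1 < o) :
    crStat (insert (o, c) t) = crStat t + (t.filter fun e => o < e.2 ∧ e.2 < c).card := by
  have ho : (o, c) ∉ t := fun h => (ht _ h).false
  rw [crStat, Finset.card_filter_product_insert ho, ← crStat,
    Finset.filter_false_of_mem fun e he h => (ht e he).asymm h.1]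
  simp only [Finset.card_empty, lt_irrefl, false_and, if_false, add_zero]
  congr 2
  exact Finset.filter_congr fun e he => by simp [ht e he]

theorem neStat_insert_of_forall_fst_lt {o c : ℕ} {t : Finset (ℕ × ℕ)} (ht : ∀ e ∈ t, e.1 < o) :
    neStat (insert (o, c) t) = neStat t + (t.filter fun e => c < e.2).card := by
  have ho : (o, c) ∉ t := fun h => (ht _ h).false
  rw [neStat, Finset.card_filter_product_insert ho, ← neStat,
    Finset.filter_false_of_mem fun e he h => (ht e he).asymm h.1]
  simp only [Finset.card_empty, lt_irrefl, false_and, if_false, add_zero]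
  congr 2
  exact Finset.filter_congr fun e he => by simp [ht e he]

namespace IsMatching

variable {m : ℕ} {s : Finset (ℕ × ℕ)}

theorem exists_mem (h : IsMatching m s) {w : ℕ} (h1 : 1 ≤ w) (h2 : w ≤ 2 * m) :
    ∃ e ∈ s, w = e.1 ∨ w = e.2 :=
  (h.2.2 w h1 h2).exists.imp fun _ he => he

theorem eq_of_mem (h : IsMatching m s) {w : ℕ} (h1 : 1 ≤ w) (h2 : w ≤ 2 * m)
    {e f : ℕ × ℕ} (he : e ∈ s) (hf : f ∈ s) (hwe : w = e.1 ∨ w = e.2)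
    (hwf : w = f.1 ∨ w = f.2) : e = f :=
  (h.2.2 w h1 h2).unique ⟨he, hwe⟩ ⟨hf, hwf⟩

theorem card_filter_snd_mem_Ioc (h : IsMatching m s) {A B : ℕ} (hA : ∀ e ∈ s, e.1 ≤ A)
    (hB : B ≤ 2 * m) : (s.filter fun e => A < e.2 ∧ e.2 ≤ B).card = B - A := by
  rw [← Nat.card_Ioc]
  refine Finset.card_bij (fun e _ => e.2)
    (fun e he => Finset.mem_Ioc.mpr (Finset.mem_filter.mp he).2) (fun e he f hf hef => ?_)
    (fun w hw => ?_)
  · obtain ⟨he, hAe, heB⟩ := Finset.mem_filter.mp he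
    exact h.eq_of_mem (w := e.2) (by omega) (by omega) he (Finset.mem_filter.mp hf).1
      (Or.inr rfl) (Or.inr hef)
  · obtain ⟨hAw, hwB⟩ := Finset.mem_Ioc.mp hw
    obtain ⟨e, he, hwe | hwe⟩ := h.exists_mem (w := w) (by omega) (by omega)
    · exact absurd (hA e he) (by omega)
    · exact ⟨e, Finset.mem_filter.mpr ⟨he, by omega⟩, hwe.symm⟩

end IsMatching

theorem pair_notMem_image_prodMap {m o c : ℕ} {t : Finset (ℕ × ℕ)} {f : ℕ → ℕ}
    (hmaps : Set.MapsTo f (Set.Icc 1 (2 * m)) (Set.Icc 1 (2 * m + 2) \ {o, c}))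
    (ht : ∀ e ∈ t, e.1 < e.2 ∧ 1 ≤ e.1 ∧ e.2 ≤ 2 * m) : (o, c) ∉ t.image (Prod.map f f) := by
  simp only [Finset.mem_image, Prod.map, Prod.mk.injEq, not_exists, not_and]
  intro e he heo _
  obtain ⟨hlt, h1, h2⟩ := ht e he
  exact (hmaps (Set.mem_Icc.mpr ⟨h1, by omega⟩)).2 (Or.inl heo)

theorem IsMatching.insert_image {m o c : ℕ} {t : Finset (ℕ × ℕ)} {f : ℕ → ℕ}
    (ht : IsMatching m t) (hf : StrictMono f)
    (hbij : Set.BijOn f (Set.Icc 1 (2 * m)) (Set.Icc 1 (2 * m + 2) \ {o, c}))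
    (ho : 1 ≤ o) (hoc : o < c) (hc : c ≤ 2 * m + 2) :
    IsMatching (m + 1) (insert (o, c) (t.image (Prod.map f f))) := by
  have hmaps : ∀ p, 1 ≤ p → p ≤ 2 * m → 1 ≤ f p ∧ f p ≤ 2 * m + 2 ∧ f p ≠ o ∧ f p ≠ c :=
    fun p h1 h2 => by simpa [not_or, and_assoc] using hbij.mapsTo ⟨h1, h2⟩
  have hnew := pair_notMem_image_prodMap hbij.mapsTo ht.2.1
  refine ⟨?_, ?_, fun w h1 h2 => ?_⟩
  · rw [Finset.card_insert_of_notMem hnew, Finset.card_image_of_injective _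
      (hf.injective.prodMap hf.injective), ht.1]
  · simp only [Finset.mem_insert, Finset.mem_image]
    rintro _ (rfl | ⟨e, he, rfl⟩)
    · exact ⟨hoc, ho, hc⟩
    · obtain ⟨hlt, h1, h2⟩ := ht.2.1 e he
      exact ⟨hf hlt, (hmaps e.1 h1 (by omega)).1, (hmaps e.2 (by omega) h2).2.1⟩
  by_cases hw : w = o ∨ w = c
  · refine ⟨(o, c), ⟨Finset.mem_insert_self _ _, hw⟩, ?_⟩
    rintro g ⟨hg, hwg⟩
    obtain rfl | ⟨e, he, rfl⟩ := Finset.mem_insert.mp hg |>.imp id Finset.mem_image.mp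
    · rfl
    obtain ⟨hlt, h1, h2⟩ := ht.2.1 e he
    have := hmaps e.1 h1 (by omega)
    have := hmaps e.2 (by omega) h2
    simp only [Prod.map] at hwg
    omega
  obtain ⟨p, ⟨hp1, hp2⟩, rfl⟩ := hbij.surjOn ⟨⟨h1, h2⟩, by simpa using hw⟩
  obtain ⟨e, he, hpe⟩ := ht.exists_mem hp1 hp2
  refine ⟨Prod.map f f e, ⟨Finset.mem_insert_of_mem (Finset.mem_image_of_mem _ he), ?_⟩, ?_⟩
  · rcases hpe with rfl | rfl <;> simp
  rintro g ⟨hg, hwg⟩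
  obtain rfl | ⟨e', he', rfl⟩ := Finset.mem_insert.mp hg |>.imp id Finset.mem_image.mp
  · exact absurd hwg hw
  simp only [Prod.map, hf.injective.eq_iff] at hwg
  rw [ht.eq_of_mem hp1 hp2 he' he hwg hpe]

theorem IsMatching.of_insert_image {m o c : ℕ} {t : Finset (ℕ × ℕ)} {f : ℕ → ℕ}
    (h : IsMatching (m + 1) (insert (o, c) (t.image (Prod.map f f)))) (hf : Function.Injective f)
    (hmaps : Set.MapsTo f (Set.Icc 1 (2 * m)) (Set.Icc 1 (2 * m + 2) \ {o, c}))
    (ht : ∀ e ∈ t, e.1 < e.2 ∧ 1 ≤ e.1 ∧ e.2 ≤ 2 * m) : IsMatching m t := by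
  have hmaps' : ∀ p, 1 ≤ p → p ≤ 2 * m → 1 ≤ f p ∧ f p ≤ 2 * m + 2 ∧ f p ≠ o ∧ f p ≠ c :=
    fun p h1 h2 => by simpa [not_or, and_assoc] using hmaps ⟨h1, h2⟩
  have hnew := pair_notMem_image_prodMap hmaps ht
  have hinj := hf.prodMap hf
  refine ⟨?_, ht, fun w h1 h2 => ?_⟩
  · have := h.1
    rwa [Finset.card_insert_of_notMem hnew, Finset.card_image_of_injective _ hinj,
      Nat.add_right_cancel_iff] at this
  obtain ⟨hw1, hw2, hwo, hwc⟩ := hmaps' w h1 h2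
  obtain ⟨g, hg, hwg⟩ := h.exists_mem (w := f w) hw1 hw2
  obtain rfl | ⟨e, he, rfl⟩ := Finset.mem_insert.mp hg |>.imp id Finset.mem_image.mp
  · exact absurd hwg (by simp [hwo, hwc])
  refine ⟨e, ⟨he, by simpa [Prod.map, hf.eq_iff] using hwg⟩, fun e' ⟨he', hwe'⟩ => hinj ?_⟩
  exact h.eq_of_mem hw1 hw2 (Finset.mem_insert_of_mem (Finset.mem_image_of_mem _ he')) hg
    (by rcases hwe' with rfl | rfl <;> simp) hwg

/-- For `v ≤ u ≤ N`, the increasing bijection from `[N]` onto `[N + 2] \ {N + 1 - u, N + 2 - v}`;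
`lowerVertex (N + 1 - u) (N + 2 - v)` is its inverse. -/
def liftVertex (N u v p : ℕ) : ℕ := if p ≤ N - u then p else if p ≤ N - v then p + 1 else p + 2

def lowerVertex (o c p : ℕ) : ℕ := if p < o then p else if p < c then p - 1 else p - 2

section liftVertex

variable {N u v p : ℕ}

theorem strictMono_liftVertex : StrictMono (liftVertex N u v) := fun p q h => by
  unfold liftVertex; split_ifs <;> omega

theorem liftVertex_of_le (hp : p ≤ N - u) : liftVertex N u v p = p := by
  simp [liftVertex, hp]

theorem bijOn_liftVertex (huv : v ≤ u) (hu : u ≤ N) :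
    Set.BijOn (liftVertex N u v) (Set.Icc 1 N) (Set.Icc 1 (N + 2) \ {N + 1 - u, N + 2 - v}) := by
  refine ⟨fun p hp => ?_, strictMono_liftVertex.injective.injOn, fun w hw => ?_⟩
  · simp only [Set.mem_Icc, Set.mem_sdiff, Set.mem_insert_iff, Set.mem_singleton_iff] at hp ⊢
    unfold liftVertex; split_ifs <;> omega
  · simp only [Set.mem_Icc, Set.mem_sdiff, Set.mem_insert_iff, Set.mem_singleton_iff] at hw
    refine ⟨lowerVertex (N + 1 - u) (N + 2 - v) w, ?_, ?_⟩
    · simp only [Set.mem_Icc]; unfold lowerVertex; split_ifs <;> omega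
    · unfold liftVertex lowerVertex; split_ifs <;> omega

end liftVertex

def liftEdge (N u v : ℕ) : ℕ × ℕ → ℕ × ℕ := Prod.map (liftVertex N u v) (liftVertex N u v)

def lowerEdge (o c : ℕ) : ℕ × ℕ → ℕ × ℕ := Prod.map (lowerVertex o c) (lowerVertex o c)

/-- Of the `2m` old vertices, `u` lie after the new opener and `v` after the new closer. -/
def addLastEdge (m u v : ℕ) (s : Finset (ℕ × ℕ)) : Finset (ℕ × ℕ) :=
  insert (2 * m + 1 - u, 2 * m + 2 - v) (s.image (liftEdge (2 * m) u v))

def lastOpener (s : Finset (ℕ × ℕ)) : ℕ := s.sup Prod.fst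

/-- The `u` old vertices after the new opener must all be closers, i.e. lie after `lastOpener s`. -/
def CanAddLastEdge (m u v : ℕ) (s : Finset (ℕ × ℕ)) : Prop :=
  IsMatching m s ∧ v ≤ u ∧ u + lastOpener s ≤ 2 * m

namespace CanAddLastEdge

variable {m u v : ℕ} {s : Finset (ℕ × ℕ)}

theorem u_le (h : CanAddLastEdge m u v s) : u ≤ 2 * m := by
  have := h.2.2; omega

theorem fst_add_le (h : CanAddLastEdge m u v s) {e : ℕ × ℕ} (he : e ∈ s) : e.1 + u ≤ 2 * m := by
  have : e.1 ≤ lastOpener s := Finset.le_sup (f := Prod.fst) he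
  have := h.2.2; omega

theorem liftEdge_fst (h : CanAddLastEdge m u v s) {e : ℕ × ℕ} (he : e ∈ s) :
    (liftEdge (2 * m) u v e).1 = e.1 :=
  liftVertex_of_le (by have := h.fst_add_le he; omega)

theorem fst_lt_of_mem_image (h : CanAddLastEdge m u v s) :
    ∀ e ∈ s.image (liftEdge (2 * m) u v), e.1 < 2 * m + 1 - u := by
  simp only [Finset.mem_image]
  rintro _ ⟨e, he, rfl⟩
  have := h.fst_add_le he
  rw [h.liftEdge_fst he]; omega

theorem isMatching_addLastEdge (h : CanAddLastEdge m u v s) :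
    IsMatching (m + 1) (addLastEdge m u v s) := by
  have := h.u_le
  have := h.2.1
  exact h.1.insert_image strictMono_liftVertex (bijOn_liftVertex h.2.1 h.u_le)
    (by omega) (by omega) (by omega)

end CanAddLastEdge

def lastCloser (M : Finset (ℕ × ℕ)) : ℕ := (M.filter fun e => e.1 = lastOpener M).sup Prod.snd

def removeLastEdge (M : Finset (ℕ × ℕ)) : Finset (ℕ × ℕ) :=
  (M.erase (lastOpener M, lastCloser M)).image (lowerEdge (lastOpener M) (lastCloser M))

def lastEdgeU (M : Finset (ℕ × ℕ)) : ℕ := 2 * M.card - 1 - lastOpener M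

def lastEdgeV (M : Finset (ℕ × ℕ)) : ℕ := 2 * M.card - lastCloser M

namespace CanAddLastEdge

variable {m u v : ℕ} {s : Finset (ℕ × ℕ)}

theorem card_addLastEdge (h : CanAddLastEdge m u v s) : (addLastEdge m u v s).card = m + 1 :=
  h.isMatching_addLastEdge.1

theorem lastOpener_addLastEdge (h : CanAddLastEdge m u v s) :
    lastOpener (addLastEdge m u v s) = 2 * m + 1 - u := by
  rw [lastOpener, addLastEdge, Finset.sup_insert, ← lastOpener]
  exact max_eq_left (Finset.sup_le fun e he => (h.fst_lt_of_mem_image e he).le)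

theorem lastCloser_addLastEdge (h : CanAddLastEdge m u v s) :
    lastCloser (addLastEdge m u v s) = 2 * m + 2 - v := by
  rw [lastCloser, h.lastOpener_addLastEdge, addLastEdge, Finset.filter_insert, if_pos rfl,
    Finset.filter_false_of_mem fun e he => (h.fst_lt_of_mem_image e he).ne]
  simp

theorem lastEdgeU_addLastEdge (h : CanAddLastEdge m u v s) :
    lastEdgeU (addLastEdge m u v s) = u := by
  have := h.u_le
  rw [lastEdgeU, h.card_addLastEdge, h.lastOpener_addLastEdge]; omega

theorem lastEdgeV_addLastEdge (h : CanAddLastEdge m u v s) :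
    lastEdgeV (addLastEdge m u v s) = v := by
  have := h.u_le
  have := h.2.1
  rw [lastEdgeV, h.card_addLastEdge, h.lastCloser_addLastEdge]; omega

theorem removeLastEdge_addLastEdge (h : CanAddLastEdge m u v s) :
    removeLastEdge (addLastEdge m u v s) = s := by
  have := h.u_le
  have := h.2.1
  rw [removeLastEdge, h.lastOpener_addLastEdge, h.lastCloser_addLastEdge, addLastEdge,
    Finset.erase_insert fun hs => (h.fst_lt_of_mem_image _ hs).false, Finset.image_image]
  refine (Finset.image_congr fun e he => ?_).trans Finset.image_id
  obtain ⟨hlt, -, h2⟩ := h.1.2.1 e he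
  simp only [Function.comp, lowerEdge, liftEdge, Prod.map, id]
  unfold lowerVertex liftVertex
  ext <;> dsimp only <;> split_ifs <;> omega

theorem crStat_addLastEdge (h : CanAddLastEdge m u v s) :
    crStat (addLastEdge m u v s) = crStat s + (u - v) := by
  have := h.u_le
  have := h.2.1
  rw [addLastEdge, crStat_insert_of_forall_fst_lt h.fst_lt_of_mem_image, liftEdge,
    crStat_image_prodMap strictMono_liftVertex, Finset.filter_image,
    Finset.card_image_of_injective _ (strictMono_liftVertex.injective.prodMap
      strictMono_liftVertex.injective)]
  refine congrArg _ ((congrArg Finset.card (Finset.filter_congr fun e _ => ?_)).trans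
    ((h.1.card_filter_snd_mem_Ioc (A := 2 * m - u) (B := 2 * m - v)
      (fun e he => by have := h.fst_add_le he; omega) (by omega)).trans (by omega)))
  simp only [Prod.map]
  unfold liftVertex; split_ifs <;> omega

theorem neStat_addLastEdge (h : CanAddLastEdge m u v s) :
    neStat (addLastEdge m u v s) = neStat s + v := by
  have := h.u_le
  have := h.2.1
  rw [addLastEdge, neStat_insert_of_forall_fst_lt h.fst_lt_of_mem_image, liftEdge,
    neStat_image_prodMap strictMono_liftVertex, Finset.filter_image,
    Finset.card_image_of_injective _ (strictMono_liftVertex.injective.prodMap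
      strictMono_liftVertex.injective)]
  refine congrArg _ ((congrArg Finset.card (Finset.filter_congr fun e he => ?_)).trans
    ((h.1.card_filter_snd_mem_Ioc (A := 2 * m - v) (B := 2 * m)
      (fun e he => by have := h.fst_add_le he; omega) le_rfl).trans (by omega)))
  have := (h.1.2.1 e he).2.2
  simp only [Prod.map]
  unfold liftVertex; split_ifs <;> omega

end CanAddLastEdge

namespace IsMatching

variable {m : ℕ} {M : Finset (ℕ × ℕ)}

theorem lastEdge_mem (hM : IsMatching (m + 1) M) : (lastOpener M, lastCloser M) ∈ M := by
  obtain ⟨e, he, hsup⟩ :=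
    Finset.exists_mem_eq_sup M (Finset.card_pos.mp (by rw [hM.1]; omega)) Prod.fst
  have hfilter : M.filter (fun g => g.1 = lastOpener M) = {e} := by
    ext g
    simp only [Finset.mem_filter, Finset.mem_singleton, lastOpener, hsup]
    refine ⟨fun ⟨hg, hge⟩ => ?_, by rintro rfl; exact ⟨he, rfl⟩⟩
    obtain ⟨hlt, h1, h2⟩ := hM.2.1 e he
    exact hM.eq_of_mem (w := e.1) h1 (by omega) hg he (Or.inl hge.symm) (Or.inl rfl)
  rwa [lastCloser, hfilter, Finset.sup_singleton, lastOpener, hsup]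

theorem mem_erase_lastEdge (hM : IsMatching (m + 1) M) {e : ℕ × ℕ}
    (he : e ∈ M.erase (lastOpener M, lastCloser M)) :
    e.1 < lastOpener M ∧ e.2 ≠ lastOpener M ∧ e.2 ≠ lastCloser M := by
  obtain ⟨hne, he⟩ := Finset.mem_erase.mp he
  have hE := hM.lastEdge_mem
  obtain ⟨hlt, h1, h2⟩ := hM.2.1 _ hE
  have hsame : ∀ w, w = lastOpener M ∨ w = lastCloser M → w = e.1 ∨ w = e.2 → False :=
    fun w hwE hwe => hne (hM.eq_of_mem (w := w) (by omega) (by omega) he hE hwe hwE)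
  have : e.1 ≤ lastOpener M := Finset.le_sup (f := Prod.fst) he
  refine ⟨lt_of_le_of_ne this fun h => hsame _ (Or.inl rfl) (Or.inl h.symm),
    fun h => hsame _ (Or.inl rfl) (Or.inr h.symm), fun h => hsame _ (Or.inr rfl) (Or.inr h.symm)⟩

theorem lastOpener_eq (hM : IsMatching (m + 1) M) : lastOpener M = 2 * m + 1 - lastEdgeU M := by
  have := hM.2.1 _ hM.lastEdge_mem
  rw [lastEdgeU, hM.1]; omega

theorem lastCloser_eq (hM : IsMatching (m + 1) M) : lastCloser M = 2 * m + 2 - lastEdgeV M := by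
  have := hM.2.1 _ hM.lastEdge_mem
  rw [lastEdgeV, hM.1]; omega

theorem image_liftEdge_removeLastEdge (hM : IsMatching (m + 1) M) :
    (removeLastEdge M).image (liftEdge (2 * m) (lastEdgeU M) (lastEdgeV M)) =
      M.erase (lastOpener M, lastCloser M) := by
  have hE := hM.2.1 _ hM.lastEdge_mem
  have := hM.lastOpener_eq
  have := hM.lastCloser_eq
  rw [removeLastEdge, Finset.image_image]
  refine (Finset.image_congr fun e he => ?_).trans Finset.image_id
  obtain ⟨hlt, h1, h2⟩ := hM.2.1 e (Finset.mem_of_mem_erase he)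
  have := hM.mem_erase_lastEdge he
  simp only [Function.comp, lowerEdge, liftEdge, Prod.map, id]
  unfold lowerVertex liftVertex
  ext <;> dsimp only <;> split_ifs <;> omega

theorem addLastEdge_removeLastEdge (hM : IsMatching (m + 1) M) :
    addLastEdge m (lastEdgeU M) (lastEdgeV M) (removeLastEdge M) = M := by
  rw [addLastEdge, hM.image_liftEdge_removeLastEdge, ← hM.lastOpener_eq, ← hM.lastCloser_eq,
    Finset.insert_erase hM.lastEdge_mem]

theorem canAddLastEdge_removeLastEdge (hM : IsMatching (m + 1) M) :
    CanAddLastEdge m (lastEdgeU M) (lastEdgeV M) (removeLastEdge M) := by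
  have hE := hM.2.1 _ hM.lastEdge_mem
  have ho := hM.lastOpener_eq
  have hc := hM.lastCloser_eq
  have hlower : ∀ e ∈ M.erase (lastOpener M, lastCloser M),
      let e' := lowerEdge (lastOpener M) (lastCloser M) e
      (e'.1 < e'.2 ∧ 1 ≤ e'.1 ∧ e'.2 ≤ 2 * m) ∧ e'.1 + lastEdgeU M ≤ 2 * m := by
    intro e he
    obtain ⟨hlt, h1, h2⟩ := hM.2.1 e (Finset.mem_of_mem_erase he)
    have := hM.mem_erase_lastEdge he
    simp only [lowerEdge, Prod.map]
    unfold lowerVertex; split_ifs <;> omega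
  have hbounds : ∀ e ∈ removeLastEdge M, (e.1 < e.2 ∧ 1 ≤ e.1 ∧ e.2 ≤ 2 * m) ∧
      e.1 + lastEdgeU M ≤ 2 * m := by
    simp only [removeLastEdge, Finset.mem_image]
    rintro _ ⟨e, he, rfl⟩
    exact hlower e he
  refine ⟨?_, by omega, ?_⟩
  · refine IsMatching.of_insert_image (o := lastOpener M) (c := lastCloser M)
      (f := liftVertex (2 * m) (lastEdgeU M) (lastEdgeV M)) ?_
      strictMono_liftVertex.injective ?_ fun e he => (hbounds e he).1
    · change IsMatching (m + 1) (insert _ ((removeLastEdge M).image (liftEdge _ _ _)))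
      rwa [hM.image_liftEdge_removeLastEdge, Finset.insert_erase hM.lastEdge_mem]
    · rw [ho, hc]; exact (bijOn_liftVertex (by omega) (by omega)).mapsTo
  · have : lastOpener (removeLastEdge M) ≤ 2 * m - lastEdgeU M :=
      Finset.sup_le fun e he => by have := (hbounds e he).2; omega
    omega

theorem crStat_eq (hM : IsMatching (m + 1) M) :
    crStat M = crStat (removeLastEdge M) + (lastEdgeU M - lastEdgeV M) := by
  conv_lhs => rw [← hM.addLastEdge_removeLastEdge]
  exact hM.canAddLastEdge_removeLastEdge.crStat_addLastEdge

theorem neStat_eq (hM : IsMatching (m + 1) M) :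
    neStat M = neStat (removeLastEdge M) + lastEdgeV M := by
  conv_lhs => rw [← hM.addLastEdge_removeLastEdge]
  exact hM.canAddLastEdge_removeLastEdge.neStat_addLastEdge

end IsMatching

def crNeSwap : ℕ → Finset (ℕ × ℕ) → Finset (ℕ × ℕ)
  | 0, s => s
  | m + 1, M =>
    addLastEdge m (lastEdgeU M) (lastEdgeU M - lastEdgeV M) (crNeSwap m (removeLastEdge M))

namespace IsMatching

variable {m u v : ℕ} {s M : Finset (ℕ × ℕ)}

theorem isMatching_crNeSwap_and_lastOpener (hs : IsMatching m s) :
    IsMatching m (crNeSwap m s) ∧ lastOpener (crNeSwap m s) = lastOpener s := by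
  induction m generalizing s with
  | zero => exact ⟨hs, rfl⟩
  | succ m ih =>
    have h := hs.canAddLastEdge_removeLastEdge
    obtain ⟨hm, ho⟩ := ih h.1
    have h' : CanAddLastEdge m (lastEdgeU s) (lastEdgeU s - lastEdgeV s)
        (crNeSwap m (removeLastEdge s)) := ⟨hm, Nat.sub_le _ _, ho ▸ h.2.2⟩
    exact ⟨h'.isMatching_addLastEdge,
      by rw [crNeSwap, h'.lastOpener_addLastEdge, hs.lastOpener_eq]⟩

theorem canAddLastEdge_crNeSwap_iff (hs : IsMatching m s) :
    CanAddLastEdge m u v (crNeSwap m s) ↔ CanAddLastEdge m u v s := by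
  obtain ⟨hm, ho⟩ := hs.isMatching_crNeSwap_and_lastOpener
  simp only [CanAddLastEdge, ho, hs, hm, true_and]

theorem canAddLastEdge_iff (hs : IsMatching (m + 1) s) :
    CanAddLastEdge (m + 1) u v s ↔ v ≤ u ∧ u ≤ lastEdgeU s + 1 := by
  have := hs.canAddLastEdge_removeLastEdge.u_le
  simp only [CanAddLastEdge, hs, hs.lastOpener_eq, true_and]
  omega

theorem canAddLastEdge_crNeSwap_removeLastEdge (hM : IsMatching (m + 1) M) :
    CanAddLastEdge m (lastEdgeU M) (lastEdgeU M - lastEdgeV M)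
      (crNeSwap m (removeLastEdge M)) :=
  have h := hM.canAddLastEdge_removeLastEdge
  (canAddLastEdge_crNeSwap_iff h.1).mpr ⟨h.1, Nat.sub_le _ _, h.2.2⟩

theorem lastEdgeU_crNeSwap (hM : IsMatching (m + 1) M) :
    lastEdgeU (crNeSwap (m + 1) M) = lastEdgeU M :=
  hM.canAddLastEdge_crNeSwap_removeLastEdge.lastEdgeU_addLastEdge

theorem lastEdgeV_crNeSwap (hM : IsMatching (m + 1) M) :
    lastEdgeV (crNeSwap (m + 1) M) = lastEdgeU M - lastEdgeV M :=
  hM.canAddLastEdge_crNeSwap_removeLastEdge.lastEdgeV_addLastEdge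

theorem removeLastEdge_crNeSwap (hM : IsMatching (m + 1) M) :
    removeLastEdge (crNeSwap (m + 1) M) = crNeSwap m (removeLastEdge M) :=
  hM.canAddLastEdge_crNeSwap_removeLastEdge.removeLastEdge_addLastEdge

theorem crStat_crNeSwap (hs : IsMatching m s) :
    crStat (crNeSwap m s) = neStat s := by
  induction m generalizing s with
  | zero => simp [crNeSwap, crStat, neStat, Finset.card_eq_zero.mp hs.1]
  | succ m ih =>
    have h := hs.canAddLastEdge_removeLastEdge
    have := h.2.1
    rw [crNeSwap, hs.canAddLastEdge_crNeSwap_removeLastEdge.crStat_addLastEdge, ih h.1,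
      hs.neStat_eq]
    omega

theorem neStat_crNeSwap (hs : IsMatching m s) :
    neStat (crNeSwap m s) = crStat s := by
  induction m generalizing s with
  | zero => simp [crNeSwap, crStat, neStat, Finset.card_eq_zero.mp hs.1]
  | succ m ih =>
    rw [crNeSwap, hs.canAddLastEdge_crNeSwap_removeLastEdge.neStat_addLastEdge,
      ih hs.canAddLastEdge_removeLastEdge.1, hs.crStat_eq]

theorem crNeSwap_crNeSwap (hs : IsMatching m s) :
    crNeSwap m (crNeSwap m s) = s := by
  induction m generalizing s with
  | zero => rfl
  | succ m ih =>
    have h := hs.canAddLastEdge_removeLastEdge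
    conv_lhs => rw [crNeSwap]
    rw [hs.lastEdgeU_crNeSwap, hs.lastEdgeV_crNeSwap, hs.removeLastEdge_crNeSwap, ih h.1,
      Nat.sub_sub_self h.2.1, hs.addLastEdge_removeLastEdge]

end IsMatching

namespace AreLastTwo

variable {s : Finset (ℕ × ℕ)} {e f e' f' : ℕ × ℕ}

theorem symm (h : AreLastTwo s e f) : AreLastTwo s f e :=
  ⟨h.2.1, h.1, h.2.2.1.symm, fun g hg hgf hge => (h.2.2.2 g hg hge hgf).symm⟩

theorem eq_or_eq (h : AreLastTwo s e f) (h' : AreLastTwo s e' f') : e' = e ∨ e' = f := by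
  by_contra! hne
  have := h.2.2.2 e' h'.1 hne.1 hne.2
  by_cases hef' : e = f'
  · have := h'.2.2.2 f h.2.1 (fun hfe' => hne.2 hfe'.symm)
      fun hff' => h.2.2.1 (hef'.trans hff'.symm)
    omega
  · have := h'.2.2.2 e h.1 (fun hee' => hne.1 hee'.symm) hef'
    omega

theorem exists_and_iff (h : AreLastTwo s e f) {P : ℕ × ℕ → ℕ × ℕ → Prop}
    (hP : ∀ x y, P x y → P y x) : (∃ e' f', AreLastTwo s e' f' ∧ P e' f') ↔ P e f := by
  refine ⟨fun ⟨e', f', h', hP'⟩ => ?_, fun hP' => ⟨e, f, h, hP'⟩⟩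
  have hne := h'.2.2.1
  rcases h.eq_or_eq h' with rfl | rfl <;> rcases h.eq_or_eq h'.symm with rfl | rfl
  exacts [absurd rfl hne, hP', hP _ _ hP', absurd rfl hne]

end AreLastTwo

theorem CanAddLastEdge.areLastTwo_addLastEdge {m u v : ℕ} {s : Finset (ℕ × ℕ)} {e : ℕ × ℕ}
    (h : CanAddLastEdge m u v s) (he : e ∈ s) (hlast : ∀ g ∈ s, g ≠ e → g.1 < e.1) :
    AreLastTwo (addLastEdge m u v s) (liftEdge (2 * m) u v e) (2 * m + 1 - u, 2 * m + 2 - v) := by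
  have hlt := h.fst_lt_of_mem_image
  have hmem : liftEdge (2 * m) u v e ∈ s.image (liftEdge (2 * m) u v) :=
    Finset.mem_image_of_mem _ he
  refine ⟨Finset.mem_insert_of_mem hmem, Finset.mem_insert_self _ _,
    fun hE => (hlt _ hmem).ne (congrArg Prod.fst hE), fun g hg hge hgE => ?_⟩
  obtain rfl | ⟨g', hg', rfl⟩ := Finset.mem_insert.mp hg |>.imp id Finset.mem_image.mp
  · exact absurd rfl hgE
  exact ⟨strictMono_liftVertex (hlast g' hg' fun hge' => hge (hge' ▸ rfl)),
    hlt _ (Finset.mem_image_of_mem _ hg')⟩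

namespace IsMatching

variable {m : ℕ} {M : Finset (ℕ × ℕ)}

theorem areLastTwo (hM : IsMatching (m + 2) M) :
    AreLastTwo M
      (liftEdge (2 * (m + 1)) (lastEdgeU M) (lastEdgeV M)
        (2 * m + 1 - lastEdgeU (removeLastEdge M), 2 * m + 2 - lastEdgeV (removeLastEdge M)))
      (2 * (m + 1) + 1 - lastEdgeU M, 2 * (m + 1) + 2 - lastEdgeV M) := by
  have hN := hM.canAddLastEdge_removeLastEdge
  have := hN.areLastTwo_addLastEdge hN.1.lastEdge_mem fun g hg hgE =>
    (hN.1.mem_erase_lastEdge (Finset.mem_erase.mpr ⟨hgE, hg⟩)).1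
  rwa [hM.addLastEdge_removeLastEdge, hN.1.lastOpener_eq, hN.1.lastCloser_eq] at this

theorem lastEdgeU_le_lastEdgeU_removeLastEdge_add_one (hM : IsMatching (m + 2) M) :
    lastEdgeU M ≤ lastEdgeU (removeLastEdge M) + 1 :=
  have hN := hM.canAddLastEdge_removeLastEdge
  (hN.1.canAddLastEdge_iff.mp hN).2

theorem lastTwoNested_iff (hM : IsMatching (m + 2) M) :
    (∃ e f, AreLastTwo M e f ∧ NestedPair e f) ↔
      lastEdgeV (removeLastEdge M) < lastEdgeV M := by
  have hN := hM.canAddLastEdge_removeLastEdge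
  have hN' := hN.1.canAddLastEdge_removeLastEdge
  have := hM.lastEdgeU_le_lastEdgeU_removeLastEdge_add_one
  have := hN.2.1
  have := hN'.2.1
  have := hN'.u_le
  rw [hM.areLastTwo.exists_and_iff fun x y h => h.symm]
  simp only [NestedPair, liftEdge, Prod.map]
  unfold liftVertex; split_ifs <;> omega

theorem lastTwoSeparated_iff (hM : IsMatching (m + 2) M) :
    (∃ e f, AreLastTwo M e f ∧ SeparatedPair e f) ↔
      lastEdgeU M ≤ lastEdgeV (removeLastEdge M) := by
  have hN := hM.canAddLastEdge_removeLastEdge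
  have hN' := hN.1.canAddLastEdge_removeLastEdge
  have := hM.lastEdgeU_le_lastEdgeU_removeLastEdge_add_one
  have := hN.2.1
  have := hN'.2.1
  have := hN'.u_le
  rw [hM.areLastTwo.exists_and_iff fun x y h => h.symm]
  simp only [SeparatedPair, liftEdge, Prod.map]
  unfold liftVertex; split_ifs <;> omega

end IsMatching

def toSeparated (m : ℕ) (M : Finset (ℕ × ℕ)) : Finset (ℕ × ℕ) :=
  addLastEdge (m + 1) (lastEdgeU M - lastEdgeV (removeLastEdge M) - 1)
    (lastEdgeU M - lastEdgeV M) (crNeSwap (m + 1) (removeLastEdge M))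

def toNested (m : ℕ) (M : Finset (ℕ × ℕ)) : Finset (ℕ × ℕ) :=
  addLastEdge (m + 1) (lastEdgeU M + lastEdgeV (crNeSwap (m + 1) (removeLastEdge M)) + 1)
    (lastEdgeU M + lastEdgeV (crNeSwap (m + 1) (removeLastEdge M)) + 1 - lastEdgeV M)
    (crNeSwap (m + 1) (removeLastEdge M))

section Bijection

variable {m : ℕ} {M : Finset (ℕ × ℕ)}

theorem canAddLastEdge_toSeparated (hM : IsMatching (m + 2) M)
    (hnest : lastEdgeV (removeLastEdge M) < lastEdgeV M) :
    CanAddLastEdge (m + 1) (lastEdgeU M - lastEdgeV (removeLastEdge M) - 1)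
      (lastEdgeU M - lastEdgeV M) (crNeSwap (m + 1) (removeLastEdge M)) := by
  have hN := hM.canAddLastEdge_removeLastEdge
  have := hN.1.canAddLastEdge_iff.mp hN
  exact hN.1.canAddLastEdge_crNeSwap_iff.mpr (hN.1.canAddLastEdge_iff.mpr ⟨by omega, by omega⟩)

theorem canAddLastEdge_toNested (hM : IsMatching (m + 2) M)
    (hsep : lastEdgeU M ≤ lastEdgeV (removeLastEdge M)) :
    CanAddLastEdge (m + 1) (lastEdgeU M + lastEdgeV (crNeSwap (m + 1) (removeLastEdge M)) + 1)
      (lastEdgeU M + lastEdgeV (crNeSwap (m + 1) (removeLastEdge M)) + 1 - lastEdgeV M)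
      (crNeSwap (m + 1) (removeLastEdge M)) := by
  have hN := hM.canAddLastEdge_removeLastEdge.1
  have := hN.canAddLastEdge_removeLastEdge.2.1
  rw [hN.lastEdgeV_crNeSwap]
  exact hN.canAddLastEdge_crNeSwap_iff.mpr (hN.canAddLastEdge_iff.mpr ⟨by omega, by omega⟩)

theorem neStat_toSeparated (hM : IsMatching (m + 2) M)
    (hnest : lastEdgeV (removeLastEdge M) < lastEdgeV M) :
    neStat (toSeparated m M) = crStat M := by
  rw [toSeparated, (canAddLastEdge_toSeparated hM hnest).neStat_addLastEdge,
    hM.canAddLastEdge_removeLastEdge.1.neStat_crNeSwap, hM.crStat_eq]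

theorem crStat_toNested (hM : IsMatching (m + 2) M)
    (hsep : lastEdgeU M ≤ lastEdgeV (removeLastEdge M)) :
    crStat (toNested m M) = neStat M := by
  have := hM.canAddLastEdge_removeLastEdge.2.1
  rw [toNested, (canAddLastEdge_toNested hM hsep).crStat_addLastEdge,
    hM.canAddLastEdge_removeLastEdge.1.crStat_crNeSwap, hM.neStat_eq]
  omega

theorem lastTwoSeparated_toSeparated (hM : IsMatching (m + 2) M)
    (hnest : lastEdgeV (removeLastEdge M) < lastEdgeV M) :
    lastEdgeU (toSeparated m M) ≤ lastEdgeV (removeLastEdge (toSeparated m M)) := by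
  have h := canAddLastEdge_toSeparated hM hnest
  have := hM.lastEdgeU_le_lastEdgeU_removeLastEdge_add_one
  rw [toSeparated, h.lastEdgeU_addLastEdge, h.removeLastEdge_addLastEdge,
    hM.canAddLastEdge_removeLastEdge.1.lastEdgeV_crNeSwap]
  omega

theorem lastTwoNested_toNested (hM : IsMatching (m + 2) M)
    (hsep : lastEdgeU M ≤ lastEdgeV (removeLastEdge M)) :
    lastEdgeV (removeLastEdge (toNested m M)) < lastEdgeV (toNested m M) := by
  have h := canAddLastEdge_toNested hM hsep
  have := hM.canAddLastEdge_removeLastEdge.2.1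
  rw [toNested, h.lastEdgeV_addLastEdge, h.removeLastEdge_addLastEdge]
  omega

theorem toNested_toSeparated (hM : IsMatching (m + 2) M)
    (hnest : lastEdgeV (removeLastEdge M) < lastEdgeV M) :
    toNested m (toSeparated m M) = M := by
  have hN := hM.canAddLastEdge_removeLastEdge
  have h := canAddLastEdge_toSeparated hM hnest
  rw [toNested, toSeparated, h.lastEdgeU_addLastEdge, h.lastEdgeV_addLastEdge,
    h.removeLastEdge_addLastEdge, hN.1.crNeSwap_crNeSwap,
    show lastEdgeU M - lastEdgeV (removeLastEdge M) - 1 + lastEdgeV (removeLastEdge M) + 1 =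
      lastEdgeU M by have := hN.2.1; omega,
    Nat.sub_sub_self hN.2.1, hM.addLastEdge_removeLastEdge]

theorem toSeparated_toNested (hM : IsMatching (m + 2) M)
    (hsep : lastEdgeU M ≤ lastEdgeV (removeLastEdge M)) :
    toSeparated m (toNested m M) = M := by
  have hN := hM.canAddLastEdge_removeLastEdge
  have h := canAddLastEdge_toNested hM hsep
  have := hN.1.canAddLastEdge_removeLastEdge.2.1
  rw [toNested, toSeparated, h.lastEdgeU_addLastEdge, h.lastEdgeV_addLastEdge,
    h.removeLastEdge_addLastEdge, hN.1.crNeSwap_crNeSwap, hN.1.lastEdgeV_crNeSwap,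
    show lastEdgeU M + (lastEdgeU (removeLastEdge M) - lastEdgeV (removeLastEdge M)) + 1 -
      (lastEdgeU (removeLastEdge M) - lastEdgeV (removeLastEdge M)) - 1 = lastEdgeU M by omega,
    Nat.sub_sub_self (by have := hN.2.1; omega), hM.addLastEdge_removeLastEdge]

end Bijection

def nestedEquivSeparated (m k : ℕ) :
    {M // IsMatching (m + 2) M ∧ crStat M = k ∧ ∃ e f, AreLastTwo M e f ∧ NestedPair e f} ≃
      {M // IsMatching (m + 2) M ∧ neStat M = k ∧ ∃ e f, AreLastTwo M e f ∧ SeparatedPair e f} where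
  toFun M :=
    have hnest := M.2.1.lastTwoNested_iff.mp M.2.2.2
    have hS := (canAddLastEdge_toSeparated M.2.1 hnest).isMatching_addLastEdge
    ⟨toSeparated m M, hS, (neStat_toSeparated M.2.1 hnest).trans M.2.2.1,
      hS.lastTwoSeparated_iff.mpr (lastTwoSeparated_toSeparated M.2.1 hnest)⟩
  invFun M :=
    have hsep := M.2.1.lastTwoSeparated_iff.mp M.2.2.2
    have hN := (canAddLastEdge_toNested M.2.1 hsep).isMatching_addLastEdge
    ⟨toNested m M, hN, (crStat_toNested M.2.1 hsep).trans M.2.2.1,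
      hN.lastTwoNested_iff.mpr (lastTwoNested_toNested M.2.1 hsep)⟩
  left_inv M := Subtype.ext (toNested_toSeparated M.2.1 (M.2.1.lastTwoNested_iff.mp M.2.2.2))
  right_inv M := Subtype.ext (toSeparated_toNested M.2.1 (M.2.1.lastTwoSeparated_iff.mp M.2.2.2))

/-- for every `k ≥ 0` and `n ≥ 2`, there are as many matchings on `[2n]` with
exactly `k` crossings whose last two edges are nested as matchings with exactly `k` nestings
whose last two edges are separated. -/
theorem card_cr_lastTwoNested_eq_card_ne_lastTwoSeparated (k n : ℕ) (hn : 2 ≤ n) :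
    Nat.card {s : Finset (ℕ × ℕ) // IsMatching n s ∧ crStat s = k ∧
        ∃ e f, AreLastTwo s e f ∧ NestedPair e f}
      = Nat.card {s : Finset (ℕ × ℕ) // IsMatching n s ∧ neStat s = k ∧
        ∃ e f, AreLastTwo s e f ∧ SeparatedPair e f} := by
  obtain ⟨m, rfl⟩ : ∃ m, n = m + 2 := ⟨n - 2, by omega⟩
  exact Nat.card_congr (nestedEquivSeparated m k)
end
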